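/- arXiv:1810.09562 — 6 statements merged into one kernel-verified Lean document; each statement's English description precedes it below -/
import Mathlib

section
/- Assume every root of the characteristic polynomial f has modulus strictly less than 1, and let κ = max_{1≤j≤p} |λ_j| < 1. Then for every t ≥ p, 1 ≤ σ_t² ≤ σ_{t+1}² ≤ Σ_{j=0}^{∞} (j+1)^{2p} κ^{2j} < +∞; in particular the limit σ_∞² = lim_{t→∞} σ_t² exists and lies in [1, +∞). -/
open MeasureTheory Filter Real

/-- The inner sum Σ_{(k₁,…,k_p)∈ℕ₀^p, k₁+⋯+k_p=s} λ₁^{k₁}⋯λ_p^{k_p}. -/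
noncomputable def hSum (p : ℕ) (lam : Fin p → ℂ) (s : ℕ) : ℂ :=
  ∑ k ∈ Finset.Nat.antidiagonalTuple p s, ∏ j, lam j ^ k j

/-- σ_t² = Σ_{s=0}^{t−p} ( Σ_{k₁+⋯+k_p=s} λ₁^{k₁}⋯λ_p^{k_p} )², a real number
(each inner sum is a real number since the φ_i are real, so its square equals
the square of its modulus). -/
noncomputable def sigmaSq (p : ℕ) (lam : Fin p → ℂ) (t : ℕ) : ℝ :=
  ∑ s ∈ Finset.range (t - p + 1), ‖hSum p lam s‖ ^ 2

/-!
Each of the at most `(s+1)^p` monomials in `hSum p lam s` has modulus at most `κ^s`, so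
`‖hSum p lam s‖² ≤ (s+1)^{2p} κ^{2s}`, a summable majorant when `κ < 1`. The partial sums
`sigmaSq p lam t` are therefore increasing and bounded, and they start with the term
`‖hSum p lam 0‖² = 1`.
-/

theorem Finset.Nat.card_antidiagonalTuple_le (p s : ℕ) :
    (Finset.Nat.antidiagonalTuple p s).card ≤ (s + 1) ^ p := by
  have hsub : Finset.Nat.antidiagonalTuple p s ⊆
      Fintype.piFinset fun _ : Fin p => Finset.range (s + 1) := by
    intro k hk
    rw [Finset.Nat.mem_antidiagonalTuple] at hk
    simp only [Fintype.mem_piFinset, Finset.mem_range, Nat.lt_succ_iff]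
    exact fun j => hk ▸ Finset.single_le_sum (fun i _ => Nat.zero_le (k i)) (Finset.mem_univ j)
  simpa using Finset.card_le_card hsub

theorem summable_add_one_pow_mul_geometric_of_norm_lt_one {R : Type*} [NormedCommRing R]
    [HasSummableGeomSeries R] (k : ℕ) {r : R} (hr : ‖r‖ < 1) :
    Summable fun n : ℕ => ((n : R) + 1) ^ k * r ^ n := by
  have hexpand : ∀ n : ℕ, ((n : R) + 1) ^ k * r ^ n =
      ∑ i ∈ Finset.range (k + 1), (k.choose i : R) * ((n : R) ^ i * r ^ n) := fun n => by
    rw [add_pow, Finset.sum_mul]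
    exact Finset.sum_congr rfl fun i _ => by ring
  simp_rw [hexpand]
  exact summable_sum fun i _ => (summable_pow_mul_geometric_of_norm_lt_one i hr).mul_left _

theorem hSum_zero (p : ℕ) (lam : Fin p → ℂ) : hSum p lam 0 = 1 := by
  simp [hSum, Finset.Nat.antidiagonalTuple_zero_right]

theorem norm_hSum_le {p : ℕ} {lam : Fin p → ℂ} {κ : ℝ} (hκ0 : 0 ≤ κ)
    (hκ : ∀ j, ‖lam j‖ ≤ κ) (s : ℕ) :
    ‖hSum p lam s‖ ≤ ((s : ℝ) + 1) ^ p * κ ^ s := by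
  have hterm : ∀ k ∈ Finset.Nat.antidiagonalTuple p s, ‖∏ j, lam j ^ k j‖ ≤ κ ^ s := by
    intro k hk
    rw [Finset.Nat.mem_antidiagonalTuple] at hk
    calc ‖∏ j, lam j ^ k j‖ = ∏ j, ‖lam j‖ ^ k j := by simp [norm_pow]
      _ ≤ ∏ j, κ ^ k j := Finset.prod_le_prod (fun j _ => by positivity)
          fun j _ => pow_le_pow_left₀ (norm_nonneg _) (hκ j) _
      _ = κ ^ s := by rw [Finset.prod_pow_eq_pow_sum, hk]
  have hcard : ((Finset.Nat.antidiagonalTuple p s).card : ℝ) ≤ ((s : ℝ) + 1) ^ p := by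
    exact_mod_cast Finset.Nat.card_antidiagonalTuple_le p s
  calc ‖hSum p lam s‖ ≤ ∑ _k ∈ Finset.Nat.antidiagonalTuple p s, κ ^ s :=
        (norm_sum_le _ _).trans (Finset.sum_le_sum hterm)
    _ = (Finset.Nat.antidiagonalTuple p s).card * κ ^ s := by
        rw [Finset.sum_const, nsmul_eq_mul]
    _ ≤ ((s : ℝ) + 1) ^ p * κ ^ s := by gcongr

theorem one_le_sigmaSq (p : ℕ) (lam : Fin p → ℂ) (t : ℕ) : 1 ≤ sigmaSq p lam t := by
  calc (1 : ℝ) = ‖hSum p lam 0‖ ^ 2 := by simp [hSum_zero]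
    _ ≤ sigmaSq p lam t :=
      Finset.single_le_sum (f := fun s => ‖hSum p lam s‖ ^ 2) (fun s _ => by positivity)
        (Finset.mem_range.mpr (Nat.succ_pos _))

theorem sigmaSq_mono (p : ℕ) (lam : Fin p → ℂ) : Monotone (sigmaSq p lam) :=
  fun _ _ hab => Finset.sum_le_sum_of_subset_of_nonneg
    (Finset.range_subset_range.mpr (by omega)) fun _ _ _ => by positivity

theorem summable_add_one_pow_mul_pow_two_mul {κ : ℝ} (hκ : |κ| < 1) (k : ℕ) :
    Summable fun j : ℕ => ((j : ℝ) + 1) ^ k * κ ^ (2 * j) := by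
  have hκ2 : ‖κ ^ 2‖ < 1 := by
    rw [norm_pow, Real.norm_eq_abs]
    exact pow_lt_one₀ (abs_nonneg κ) hκ two_ne_zero
  simpa only [pow_mul] using summable_add_one_pow_mul_geometric_of_norm_lt_one k hκ2

theorem sigmaSq_le_tsum {p : ℕ} {lam : Fin p → ℂ} {κ : ℝ} (hκ0 : 0 ≤ κ) (hκ1 : κ < 1)
    (hκ : ∀ j, ‖lam j‖ ≤ κ) (t : ℕ) :
    sigmaSq p lam t ≤ ∑' j : ℕ, ((j : ℝ) + 1) ^ (2 * p) * κ ^ (2 * j) := by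
  have hterm (s : ℕ) : ‖hSum p lam s‖ ^ 2 ≤ ((s : ℝ) + 1) ^ (2 * p) * κ ^ (2 * s) :=
    calc ‖hSum p lam s‖ ^ 2 ≤ (((s : ℝ) + 1) ^ p * κ ^ s) ^ 2 := by
          gcongr; exact norm_hSum_le hκ0 hκ s
      _ = ((s : ℝ) + 1) ^ (2 * p) * κ ^ (2 * s) := by ring
  calc sigmaSq p lam t
      ≤ ∑ s ∈ Finset.range (t - p + 1), ((s : ℝ) + 1) ^ (2 * p) * κ ^ (2 * s) :=
        Finset.sum_le_sum fun s _ => hterm s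
    _ ≤ _ := (summable_add_one_pow_mul_pow_two_mul (abs_lt.mpr ⟨by linarith, hκ1⟩) _).sum_le_tsum
        _ fun s _ => by positivity

/-- Assume every root of f(λ) = λ^p − φ₁λ^{p−1} − ⋯ − φ_p has modulus < 1, and let
κ = max_j |λ_j| < 1.  Then for every t ≥ p,
1 ≤ σ_t² ≤ σ_{t+1}² ≤ Σ_{j=0}^∞ (j+1)^{2p} κ^{2j} < +∞;
in particular σ_∞² = lim_t σ_t² exists and lies in [1,∞). -/
theorem sigmaSq_bounds_and_limit (p : ℕ) (lam : Fin p → ℂ)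
    (hH : ∀ j, ‖lam j‖ < 1)
    (κ : ℝ) (hκub : ∀ j, ‖lam j‖ ≤ κ) (hκmax : ∃ j, ‖lam j‖ = κ) :
    (∀ t, p ≤ t →
      1 ≤ sigmaSq p lam t ∧ sigmaSq p lam t ≤ sigmaSq p lam (t + 1) ∧
        sigmaSq p lam (t + 1) ≤ ∑' j : ℕ, ((j : ℝ) + 1) ^ (2 * p) * κ ^ (2 * j)) ∧
    Summable (fun j : ℕ => ((j : ℝ) + 1) ^ (2 * p) * κ ^ (2 * j)) ∧
    ∃ σinf : ℝ, 1 ≤ σinf ∧ Tendsto (fun t => sigmaSq p lam t) atTop (nhds σinf) := by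
  obtain ⟨j, rfl⟩ := hκmax
  have hκ0 : 0 ≤ ‖lam j‖ := norm_nonneg _
  have hbdd : BddAbove (Set.range (sigmaSq p lam)) :=
    ⟨_, Set.forall_mem_range.mpr (sigmaSq_le_tsum hκ0 (hH j) hκub)⟩
  refine ⟨fun t _ => ⟨one_le_sigmaSq p lam t, sigmaSq_mono p lam t.le_succ,
      sigmaSq_le_tsum hκ0 (hH j) hκub _⟩,
    summable_add_one_pow_mul_pow_two_mul (by rw [abs_norm]; exact hH j) _,
    ⨆ t, sigmaSq p lam t, le_ciSup_of_le hbdd 0 (one_le_sigmaSq p lam 0),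
    tendsto_atTop_ciSup (sigmaSq_mono p lam) hbdd⟩
end

section
/- Assume every root of the characteristic polynomial f has modulus strictly less than 1 and that all roots of f are real. Then there exists a nonempty set 𝒞 ⊆ ℝ^p whose complement has Lebesgue measure zero such that for every initial data x = (x_0,…,x_{p−1}) ∈ 𝒞 there exist r = r(x) > 0, l = l(x) ∈ {1,…,p} and real numbers v_t = v(t,x) with: lim_{t→∞} |x_t/(t^{l−1} r^t) − v_t| = 0, sup_{t≥0} |v_t| < +∞, and liminf_{t→∞} |v_t| > 0, where (x_t) is the solution of (L) with initial data x. -/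
/-!
Write the roots as reals `ν_j`, nonzero since `φ_p ≠ 0`. For a root `ν` of multiplicity `m` the
sequences `t ↦ t^k ν^t`, `k < m`, solve the recurrence: `(S - ν)^m` kills them (`S` the shift)
and `(X - ν)^m` divides the characteristic polynomial. They are generalized eigenvectors of `S`
for the eigenvalue `ν`, and polynomial in `t` for a fixed `ν`, so these `p` solutions are
independent and form a basis of the `p`-dimensional solution space: every solution is
`x_t = ∑ c_j t^{k_j} ν_j^t` with `c` linear in the initial data.

Let `r = max |ν_j|` and `l - 1` the largest `k_j` among the roots `±r`. Every other term is
`o(t^{l-1} r^t)`, so `x_t / (t^{l-1} r^t) - (a + (-1)^t b) → 0`, where `a`, `b` are the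
coefficients of `t^{l-1} r^t` and `t^{l-1} (-r)^t`. Off the two hyperplanes `a + b = 0` and
`a - b = 0` of initial data, `v_t = a + (-1)^t b` satisfies `0 < min |a ± b| ≤ |v_t| ≤ |a| + |b|`.
-/

open MeasureTheory Filter Polynomial Asymptotics Topology

section Shift

variable (R : Type*) [CommRing R]

noncomputable def seqShift : Module.End R (ℕ → R) := LinearMap.funLeft R R Nat.succ

variable {R}

lemma seqShift_pow_apply (n : ℕ) (u : ℕ → R) (t : ℕ) :
    (seqShift R ^ n) u t = u (t + n) := by
  induction n generalizing t with
  | zero => rfl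
  | succ n ih =>
    rw [pow_succ', Module.End.mul_apply]
    exact (ih (t + 1)).trans (congrArg u (by ring))

lemma fwdDiff_iter_comp_natCast (g : R → R) (n : ℕ) :
    (fwdDiff 1)^[n] (fun t : ℕ => g t) = fun t : ℕ => ((fwdDiff 1)^[n] g) t := by
  induction n with
  | zero => rfl
  | succ n ih =>
    rw [Function.iterate_succ_apply', Function.iterate_succ_apply', ih]
    ext t
    simp [fwdDiff]

lemma seqShift_sub_smul_pow_apply (μ : R) (f : ℕ → R) (n : ℕ) :
    ((seqShift R - μ • 1) ^ n) (fun t => f t * μ ^ t) =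
      fun t => ((fwdDiff 1)^[n] f) t * μ ^ (t + n) := by
  induction n with
  | zero => rfl
  | succ n ih =>
    ext t
    rw [pow_succ', Module.End.mul_apply, ih, Function.iterate_succ_apply']
    simp only [LinearMap.sub_apply, LinearMap.smul_apply, Module.End.one_apply, Pi.sub_apply,
      Pi.smul_apply, smul_eq_mul, fwdDiff]
    change _ * μ ^ (t + 1 + n) - _ = _
    ring

noncomputable def expPoly (μ : R) : R[X] →ₗ[R] ℕ → R where
  toFun q t := q.eval (t : R) * μ ^ t
  map_add' _ _ := by ext; simp [add_mul]
  map_smul' _ _ := by ext; simp [mul_assoc]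

lemma seqShift_sub_smul_pow_expPoly (μ : R) {q : R[X]} {n : ℕ} (hq : q.natDegree < n) :
    ((seqShift R - μ • 1) ^ n) (expPoly μ q) = 0 := by
  change ((seqShift R - μ • 1) ^ n) (fun t => q.eval (t : R) * μ ^ t) = 0
  rw [seqShift_sub_smul_pow_apply, fwdDiff_iter_comp_natCast q.eval,
    Polynomial.fwdDiff_iter_eq_zero_of_degree_lt hq]
  ext; simp

lemma expPoly_injective [IsDomain R] [CharZero R] {μ : R} (hμ : μ ≠ 0) :
    Function.Injective (expPoly μ) := by
  rw [← LinearMap.ker_eq_bot, LinearMap.ker_eq_bot']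
  intro q hq
  refine q.eq_zero_of_infinite_isRoot
    (Set.infinite_of_injective_forall_mem Nat.cast_injective fun t : ℕ => ?_)
  exact (mul_eq_zero.mp (congrFun hq t)).resolve_right (pow_ne_zero t hμ)

end Shift

namespace LinearRecurrence

variable {R : Type*} [CommRing R] (E : LinearRecurrence R)

lemma isSolution_iff_aeval_charPoly (u : ℕ → R) :
    E.IsSolution u ↔ aeval (seqShift R) E.charPoly u = 0 := by
  rw [funext_iff]
  refine forall_congr' fun t => ?_
  simp [charPoly, aeval_monomial, Module.algebraMap_end_eq_smul_id, seqShift_pow_apply,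
    sub_eq_zero]

lemma isSolution_of_dvd_charPoly {μ : R} {n : ℕ} (hdvd : (X - C μ) ^ n ∣ E.charPoly)
    {u : ℕ → R} (hu : ((seqShift R - μ • 1) ^ n) u = 0) : E.IsSolution u := by
  obtain ⟨q, hq⟩ := hdvd
  rw [isSolution_iff_aeval_charPoly, hq, mul_comm, map_mul, Module.End.mul_apply, map_pow,
    map_sub, aeval_X, aeval_C, Module.algebraMap_end_eq_smul_id]
  exact (congrArg _ hu).trans (map_zero _)

lemma isSolution_pow_mul_pow {μ : R} {k : ℕ} (hdvd : (X - C μ) ^ (k + 1) ∣ E.charPoly) :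
    E.IsSolution fun t => (t : R) ^ k * μ ^ t := by
  simpa [expPoly] using E.isSolution_of_dvd_charPoly hdvd (u := expPoly μ (X ^ k))
    (seqShift_sub_smul_pow_expPoly μ (Nat.lt_succ_of_le (natDegree_X_pow_le k)))

lemma isSolution_mk_rev_iff {p : ℕ} (φ : Fin p → R) (x : ℕ → R) :
    (⟨p, fun i => φ i.rev⟩ : LinearRecurrence R).IsSolution x ↔
      ∀ t, x (t + p) = ∑ i : Fin p, φ i * x (t + p - 1 - i) := by
  refine forall_congr' fun t => Eq.congr_right ?_
  rw [← Equiv.sum_comp Fin.revPerm]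
  refine Finset.sum_congr rfl fun i _ => ?_
  simp only [Fin.revPerm_apply, Fin.rev_rev, Fin.val_rev]
  have hi : (i : ℕ) < p := i.2
  rw [show t + (p - (i + 1)) = t + p - 1 - i by omega]

lemma charPoly_mk_rev_eq_prod [IsDomain R] [Infinite R] {p : ℕ} (φ ν : Fin p → R)
    (h : ∀ z : R, z ^ p - ∑ i : Fin p, φ i * z ^ (p - 1 - i) = ∏ j, (z - ν j)) :
    (⟨p, fun i => φ i.rev⟩ : LinearRecurrence R).charPoly = ∏ j, (X - C (ν j)) := by
  refine Polynomial.funext fun z => ?_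
  rw [eval_prod, charPoly, ← Equiv.sum_comp Fin.revPerm]
  simpa [eval_finsetSum, Fin.val_rev, Nat.sub_sub, add_comm] using h z

end LinearRecurrence

section Independence

variable {R : Type*} [CommRing R] [IsDomain R] [CharZero R]

theorem linearIndependent_pow_mul_pow :
    LinearIndependent R fun i : {μ : R // μ ≠ 0} × ℕ =>
      fun t : ℕ => (t : R) ^ i.2 * (i.1 : R) ^ t := by
  have hspan (μ : {μ : R // μ ≠ 0}) :
      Submodule.span R (Set.range fun k => expPoly (μ : R) (X ^ k)) ≤
        (seqShift R).maxGenEigenspace μ :=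
    Submodule.span_le.mpr <| Set.range_subset_iff.mpr fun k =>
      ((seqShift R).mem_maxGenEigenspace _ _).mpr
        ⟨k + 1, seqShift_sub_smul_pow_expPoly _ (Nat.lt_succ_of_le (natDegree_X_pow_le k))⟩
  have hsigma : LinearIndependent R
      fun i : Σ _ : {μ : R // μ ≠ 0}, ℕ => expPoly (i.1 : R) (X ^ i.2) :=
    linearIndependent_iUnion_finite
      (fun μ => by
        simpa [monomial_one_right_eq_X_pow, Function.comp_def] using
          (basisMonomials R).linearIndependent.map' (expPoly (μ : R))
            (LinearMap.ker_eq_bot.mpr (expPoly_injective μ.2)))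
      (fun μ s _ hμs => (((seqShift R).independent_maxGenEigenspace.comp
        Subtype.val_injective).disjoint_biSup hμs).mono (hspan μ)
          (iSup₂_mono fun ν _ => hspan ν))
  convert hsigma.comp _ (Equiv.sigmaEquivProd _ _).symm.injective with i t
  simp [expPoly]

end Independence

section PriorCount

open Finset

variable {ι α : Type*} [Fintype ι] [LinearOrder ι] (ν : ι → α)

open scoped Classical in
/-- Listing the roots with multiplicity as `ν`, the pairs `(ν j, priorCount ν j)` are exactly the
pairs `(μ, k)` with `k` below the multiplicity of `μ`. -/
noncomputable def priorCount (j : ι) : ℕ := #{i | i < j ∧ ν i = ν j}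

open scoped Classical in
lemma priorCount_lt_card (j : ι) : priorCount ν j < #{i | ν i = ν j} :=
  card_lt_card <| (ssubset_iff_of_subset (monotone_filter_right _ fun _ _ h => h.2)).mpr
    ⟨j, by simp, by simp⟩

lemma priorCount_lt_priorCount {i j : ι} (hij : i < j) (h : ν i = ν j) :
    priorCount ν i < priorCount ν j := by
  classical
  exact card_lt_card <| (ssubset_iff_of_subset (fun k hk => by
      simp only [mem_filter, mem_univ, true_and] at hk ⊢
      exact ⟨hk.1.trans hij, hk.2.trans h⟩)).mpr ⟨i, by simp [hij, h], by simp⟩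

lemma injective_prod_priorCount : Function.Injective fun j => (ν j, priorCount ν j) := by
  intro i j hij
  simp only [Prod.mk.injEq] at hij
  rcases lt_trichotomy i j with h | h | h
  · exact absurd hij.2 (priorCount_lt_priorCount ν h hij.1).ne
  · exact h
  · exact absurd hij.2 (priorCount_lt_priorCount ν h hij.1.symm).ne'

open scoped Classical in
lemma X_sub_C_pow_priorCount_succ_dvd_prod {R : Type*} [CommRing R] (ν : ι → R) (j : ι) :
    (X - C (ν j)) ^ (priorCount ν j + 1) ∣ ∏ i, (X - C (ν i)) :=
  calc (X - C (ν j)) ^ (priorCount ν j + 1) ∣ (X - C (ν j)) ^ #{i | ν i = ν j} :=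
        pow_dvd_pow _ (priorCount_lt_card ν j)
    _ = ∏ i ∈ {i | ν i = ν j}, (X - C (ν i)) := by
        rw [prod_congr rfl fun i hi => by rw [(mem_filter.mp hi).2], prod_const]
    _ ∣ ∏ i, (X - C (ν i)) := prod_dvd_prod_of_subset _ _ _ (subset_univ _)

lemma priorCount_lt_card_univ (j : ι) : priorCount ν j < Fintype.card ι := by
  classical
  exact (priorCount_lt_card ν j).trans_le (card_le_univ _)

end PriorCount

theorem LinearRecurrence.exists_basis_pow_mul_pow {K : Type*} [Field K] [CharZero K]
    (E : LinearRecurrence K) (ν : Fin E.order → K) (hν : ∀ j, ν j ≠ 0)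
    (hE : E.charPoly = ∏ j, (X - C (ν j))) :
    ∃ B : Module.Basis (Fin E.order) K E.solSpace,
      ∀ j, (B j : ℕ → K) = fun t : ℕ => (t : K) ^ priorCount ν j * ν j ^ t := by
  let u (j : Fin E.order) : E.solSpace := ⟨fun t : ℕ => (t : K) ^ priorCount ν j * ν j ^ t,
    E.isSolution_pow_mul_pow (hE ▸ X_sub_C_pow_priorCount_succ_dvd_prod ν j)⟩
  have hu : LinearIndependent K u := .of_comp E.solSpace.subtype <|
    linearIndependent_pow_mul_pow.comp (fun j => (⟨ν j, hν j⟩, priorCount ν j)) fun i j hij =>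
      injective_prod_priorCount ν (by simpa using hij)
  have : FiniteDimensional K E.solSpace := E.toInit.symm.finiteDimensional
  exact ⟨basisOfLinearIndependentOfCardEqFinrank' u hu (by simp [E.toInit.finrank_eq]),
    fun j => by simp [u]⟩

lemma ne_zero_of_sub_sum_eq_prod {R : Type*} [CommRing R] {p : ℕ} (hp : 0 < p)
    (φ ν : Fin p → R) (hφ : φ ⟨p - 1, Nat.sub_lt hp Nat.one_pos⟩ ≠ 0)
    (h : (0 : R) ^ p - ∑ i : Fin p, φ i * 0 ^ (p - 1 - i) = ∏ j, (0 - ν j)) (j : Fin p) :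
    ν j ≠ 0 := by
  intro hj
  have hlast (i : Fin p) (hi : i ≠ ⟨p - 1, by omega⟩) : φ i * 0 ^ (p - 1 - i) = 0 := by
    simp only [Ne, Fin.ext_iff] at hi
    simp [zero_pow (by omega : p - 1 - i ≠ 0)]
  rw [Finset.prod_eq_zero (Finset.mem_univ j) (by simp [hj]),
    Finset.sum_eq_single _ (fun i _ => hlast i) (by simp)] at h
  exact hφ (by simpa [zero_pow hp.ne'] using h)

lemma isLittleO_pow_mul_pow {k m : ℕ} {ν r : ℝ} (h : |ν| < r ∨ |ν| = r ∧ k < m) :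
    (fun n : ℕ => (n : ℝ) ^ k * ν ^ n) =o[atTop] fun n : ℕ => (n : ℝ) ^ m * r ^ n := by
  rcases h with hlt | ⟨heq, hkm⟩
  · refine (isLittleO_pow_const_mul_const_pow_const_pow_of_norm_lt k hlt).trans_isBigO ?_
    refine IsBigO.of_bound 1 ((eventually_ge_atTop 1).mono fun n hn => ?_)
    rw [one_mul, norm_mul]
    exact le_mul_of_one_le_left (norm_nonneg _)
      (by simpa using one_le_pow₀ (Nat.one_le_cast.mpr hn))
  · refine ((isLittleO_pow_pow_atTop_of_lt hkm).comp_tendsto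
      tendsto_natCast_atTop_atTop).mul_isBigO (isBigO_of_le _ fun n => ?_)
    simp [← heq]

section Dominant

variable {ι : Type*} [Fintype ι]

theorem tendsto_sum_div_sub_sum_dominant (c : ι → ℝ) (k : ι → ℕ) (ν : ι → ℝ) {r : ℝ} {m : ℕ}
    (hν : ∀ j, |ν j| ≤ r) (hk : ∀ j, |ν j| = r → k j ≤ m) :
    Tendsto (fun n : ℕ => (∑ j, c j * ((n : ℝ) ^ k j * ν j ^ n)) / ((n : ℝ) ^ m * r ^ n) -
      ∑ j, if |ν j| = r ∧ k j = m then c j * (ν j / r) ^ n else 0) atTop (𝓝 0) := by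
  simp_rw [Finset.sum_div, ← Finset.sum_sub_distrib]
  suffices h : ∀ j, Tendsto (fun n : ℕ =>
      c j * ((n : ℝ) ^ k j * ν j ^ n) / ((n : ℝ) ^ m * r ^ n) -
        if |ν j| = r ∧ k j = m then c j * (ν j / r) ^ n else 0) atTop (𝓝 0) by
    simpa using tendsto_finsetSum (Finset.univ : Finset ι) fun j _ => h j
  intro j
  by_cases hj : |ν j| = r ∧ k j = m
  · refine tendsto_const_nhds.congr' ((eventually_ge_atTop 1).mono fun n hn => ?_)
    have : (n : ℝ) ^ m ≠ 0 := pow_ne_zero _ (Nat.cast_ne_zero.mpr (by omega))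
    beta_reduce
    rw [if_pos hj, hj.2, mul_div_assoc, mul_div_mul_left _ _ this, div_pow, sub_self]
  · have hlt : |ν j| < r ∨ |ν j| = r ∧ k j < m := by
      rcases (hν j).lt_or_eq with h | h
      · exact Or.inl h
      · exact Or.inr ⟨h, (hk j h).lt_of_ne fun h' => hj ⟨h, h'⟩⟩
    simpa [if_neg hj, mul_div_assoc] using
      ((isLittleO_pow_mul_pow hlt).tendsto_div_nhds_zero.const_mul (c j))

theorem exists_dominant_asymptotics [Nonempty ι] (ν : ι → ℝ) (hν : ∀ j, ν j ≠ 0) (k : ι → ℕ) :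
    ∃ r > 0, ∃ j₀ : ι, ∃ s t : Finset ι, Disjoint s t ∧ (j₀ ∈ s ∨ j₀ ∈ t) ∧ ∀ c : ι → ℝ,
      Tendsto (fun n : ℕ => (∑ j, c j * ((n : ℝ) ^ k j * ν j ^ n)) / ((n : ℝ) ^ k j₀ * r ^ n) -
        (∑ j ∈ s, c j + (-1) ^ n * ∑ j ∈ t, c j)) atTop (𝓝 0) := by
  classical
  obtain ⟨j₁, -, hj₁⟩ := Finset.exists_max_image Finset.univ (|ν ·|) Finset.univ_nonempty
  set r := |ν j₁|
  have hr : 0 < r := abs_pos.mpr (hν j₁)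
  obtain ⟨j₀, hj₀, hmax⟩ := Finset.exists_max_image {j | |ν j| = r} k ⟨j₁, by simp [r]⟩
  have habs (j : ι) : |ν j| = r ↔ ν j = r ∨ ν j = -r := abs_eq hr.le
  refine ⟨r, hr, j₀, ({j | ν j = r ∧ k j = k j₀} : Finset ι),
    ({j | ν j = -r ∧ k j = k j₀} : Finset ι), ?_, ?_, fun c => ?_⟩
  · exact Finset.disjoint_filter.mpr fun j _ h h' => by linarith [h.1.symm.trans h'.1]
  · simpa using (habs j₀).mp (Finset.mem_filter.mp hj₀).2
  · convert tendsto_sum_div_sub_sum_dominant c k ν (fun j => hj₁ j (Finset.mem_univ j))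
      (fun j hj => hmax j (by simpa using hj)) using 3 with n
    rw [Finset.sum_filter, Finset.sum_filter, Finset.mul_sum, ← Finset.sum_add_distrib]
    refine Finset.sum_congr rfl fun j _ => ?_
    have hr' : -r ≠ r := (neg_lt_self hr).ne
    simp only [habs]
    rcases eq_or_ne (ν j) r with h | h
    · simp [h, hr.ne', hr'.symm]
    · rcases eq_or_ne (ν j) (-r) with h' | h'
      · simp [h', hr.ne', hr', mul_comm]
      · simp [h, h']

end Dominant

lemma abs_add_neg_one_pow_mul_le (a b : ℝ) (n : ℕ) : |a + (-1) ^ n * b| ≤ |a| + |b| := by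
  simpa using abs_add_le a ((-1) ^ n * b)

lemma min_le_abs_add_neg_one_pow_mul (a b : ℝ) (n : ℕ) :
    min |a + b| |a - b| ≤ |a + (-1) ^ n * b| := by
  rcases n.even_or_odd with h | h
  · simp [h.neg_one_pow]
  · simp [h.neg_one_pow, ← sub_eq_add_neg]

lemma liminf_abs_add_neg_one_pow_mul_pos {a b : ℝ} (h₁ : a + b ≠ 0) (h₂ : a - b ≠ 0) :
    0 < liminf (fun n : ℕ => |a + (-1) ^ n * b|) atTop :=
  (lt_min (abs_pos.mpr h₁) (abs_pos.mpr h₂)).trans_le <|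
    le_liminf_of_le (isCoboundedUnder_ge_of_le atTop (abs_add_neg_one_pow_mul_le a b))
      (.of_forall (min_le_abs_add_neg_one_pow_mul a b))

lemma Module.Basis.sum_coord_add_smul_sum_coord_ne_zero {ι R M : Type*} [CommRing R]
    [Nontrivial R] [AddCommGroup M] [Module R M] (B : Module.Basis ι R M) {s t : Finset ι}
    (hst : Disjoint s t) {j : ι} (hj : j ∈ s ∨ j ∈ t) {ε : R} (hε : ε ≠ 0) :
    ∑ i ∈ s, B.coord i + ε • ∑ i ∈ t, B.coord i ≠ 0 := by
  classical
  intro h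
  have := LinearMap.congr_fun h (B j)
  rcases hj with hj | hj
  · simp [Finsupp.single_apply, hj, Finset.disjoint_left.mp hst hj] at this
  · simp [Finsupp.single_apply, hj, Finset.disjoint_right.mp hst hj, hε] at this

lemma LinearMap.ae_apply_ne_zero {E : Type*} [NormedAddCommGroup E] [NormedSpace ℝ E]
    [MeasurableSpace E] [BorelSpace E] [FiniteDimensional ℝ E] (μ : Measure E)
    [μ.IsAddHaarMeasure] {f : E →ₗ[ℝ] ℝ} (hf : f ≠ 0) : ∀ᵐ x ∂μ, f x ≠ 0 :=
  ae_iff.mpr <| by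
    simp only [ne_eq, not_not]
    exact Measure.addHaar_submodule μ _ (mt LinearMap.ker_eq_top.mp hf)

lemma Module.Basis.ae_sum_repr_add_ne_zero_and_sub_ne_zero {ι E : Type*}
    [NormedAddCommGroup E] [NormedSpace ℝ E] [MeasurableSpace E] [BorelSpace E]
    [FiniteDimensional ℝ E] (μ : Measure E) [μ.IsAddHaarMeasure] (B : Module.Basis ι ℝ E)
    {s t : Finset ι} (hst : Disjoint s t) {j : ι} (hj : j ∈ s ∨ j ∈ t) :
    ∀ᵐ x ∂μ, ∑ i ∈ s, B.repr x i + ∑ i ∈ t, B.repr x i ≠ 0 ∧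
      ∑ i ∈ s, B.repr x i - ∑ i ∈ t, B.repr x i ≠ 0 := by
  filter_upwards
    [LinearMap.ae_apply_ne_zero μ (B.sum_coord_add_smul_sum_coord_ne_zero hst hj one_ne_zero),
      LinearMap.ae_apply_ne_zero μ
        (B.sum_coord_add_smul_sum_coord_ne_zero hst hj (neg_ne_zero.mpr one_ne_zero))]
    with x h₁ h₂
  simpa [sub_eq_add_neg] using And.intro h₁ h₂

lemma LinearRecurrence.eq_sum_repr_smul {R ι : Type*} [CommRing R] [Fintype ι]
    (E : LinearRecurrence R) (B : Module.Basis ι R E.solSpace) {x : ℕ → R}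
    (hx : E.IsSolution x) {x₀ : Fin E.order → R} (hx₀ : ∀ i : Fin E.order, x i = x₀ i) :
    x = ∑ j, (B.map E.toInit).repr x₀ j • (B j : ℕ → R) := by
  rw [E.eq_mk_of_is_sol_of_eq_init' hx hx₀, Module.Basis.map_repr]
  change ((E.toInit.symm x₀ : E.solSpace) : ℕ → R) = _
  conv_lhs => rw [← B.sum_repr (E.toInit.symm x₀)]
  simp only [Submodule.coe_sum, Submodule.coe_smul, LinearEquiv.trans_apply]

/-- Real-roots case: assume every root of the characteristic polynomial is a real
number of modulus < 1.  Then there is a nonempty set 𝒞 ⊆ ℝ^p whose complement is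
Lebesgue-null such that for every initial data in 𝒞, the solution (x_t) of the
linear recurrence (L) admits r > 0, l ∈ {1,…,p} and reals (v_t) with
x_t/(t^{l−1}r^t) − v_t → 0, sup_t |v_t| < ∞ and liminf_t |v_t| > 0. -/
theorem real_roots_good_set (p : ℕ) (hp : 0 < p) (φ : Fin p → ℝ)
    (hφ : φ ⟨p - 1, by omega⟩ ≠ 0) (lam : Fin p → ℂ)
    (hroots : ∀ z : ℂ,
      z ^ p - ∑ i : Fin p, (φ i : ℂ) * z ^ (p - 1 - i.val) = ∏ j, (z - lam j))
    (hreal : ∀ j, (lam j).im = 0) :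
    ∃ C : Set (Fin p → ℝ), C.Nonempty ∧ volume Cᶜ = 0 ∧
      ∀ x₀ ∈ C, ∀ x : ℕ → ℝ,
        (∀ i : Fin p, x i.val = x₀ i) →
        (∀ t : ℕ, x (t + p) = ∑ i : Fin p, φ i * x (t + p - 1 - i.val)) →
        ∃ r : ℝ, 0 < r ∧ ∃ l : ℕ, 1 ≤ l ∧ l ≤ p ∧ ∃ v : ℕ → ℝ,
          Tendsto (fun t : ℕ => |x t / ((t : ℝ) ^ (l - 1) * r ^ t) - v t|)
            atTop (nhds 0) ∧
          BddAbove (Set.range fun t : ℕ => |v t|) ∧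
          0 < Filter.liminf (fun t : ℕ => |v t|) atTop := by
  set ν : Fin p → ℝ := fun j => (lam j).re
  have hroots' (z : ℝ) : z ^ p - ∑ i : Fin p, φ i * z ^ (p - 1 - i) = ∏ j, (z - ν j) := by
    have hlam (j : Fin p) : lam j = (ν j : ℂ) := Complex.ext rfl (by simp [hreal j])
    have h := hroots z
    simp only [hlam] at h
    exact_mod_cast h
  have hν := ne_zero_of_sub_sum_eq_prod hp φ ν hφ (hroots' 0)
  set E : LinearRecurrence ℝ := ⟨p, fun i => φ i.rev⟩
  obtain ⟨B, hB⟩ :=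
    E.exists_basis_pow_mul_pow ν hν (LinearRecurrence.charPoly_mk_rev_eq_prod φ ν hroots')
  have : Nonempty (Fin p) := ⟨⟨0, hp⟩⟩
  obtain ⟨r, hr, j₀, s, t, hst, hj₀, hlim⟩ := exists_dominant_asymptotics ν hν (priorCount ν)
  have hae := (B.map E.toInit).ae_sum_repr_add_ne_zero_and_sub_ne_zero volume hst hj₀
  refine ⟨_, hae.exists, ae_iff.mp hae, fun x₀ ⟨h₁, h₂⟩ x hinit hrec => ?_⟩
  have hx := E.eq_sum_repr_smul B ((LinearRecurrence.isSolution_mk_rev_iff φ x).mpr hrec) hinit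
  set c := (B.map E.toInit).repr x₀
  refine ⟨r, hr, priorCount ν j₀ + 1, by omega, by simpa using priorCount_lt_card_univ ν j₀,
    fun n => ∑ j ∈ s, c j + (-1) ^ n * ∑ j ∈ t, c j, ?_,
    ⟨_, Set.forall_mem_range.mpr (abs_add_neg_one_pow_mul_le _ _)⟩,
    liminf_abs_add_neg_one_pow_mul_pos h₁ h₂⟩
  simpa [hx, hB] using (hlim c).abs
end

section
/- Let m ∈ ℕ with m ≥ 1, let θ_1,…,θ_m ∈ [0,1) be rationally independent, i.e. k_1 θ_1 + ⋯ + k_m θ_m ∉ ℤ for every (k_1,…,k_m) ∈ ℤ^m ∖ {0}, and let (α_j, β_j) ∈ ℝ² ∖ {(0,0)} for j = 1,…,m. Define v_t = Σ_{j=1}^{m} ( α_j cos(2πθ_j t) + β_j sin(2πθ_j t) ) for t ∈ ℕ. Then liminf_{t→∞} |v_t| = 0. -/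
/-!
Choose a point `y` of the torus at which every summand `α_j cos (2π x_j) + β_j sin (2π x_j)`
vanishes. The sum is continuous and `1`-periodic in each coordinate, so it suffices that the
orbit `(θ_j t)_j` comes within any `δ > 0` of `y` modulo `ℤ^m` for infinitely many `t`
(Kronecker). For that, average the nonnegative kernel `∏_j ((1 + cos 2π(θ_j t - y_j)) / 2)^n`
over `t`: expanded into characters, rational independence kills every nonconstant frequency in the
Cesàro limit, which is therefore the constant term `(C(2n, n) / 4^n)^m ≥ (2n + 1)^(-m)`. If the
orbit eventually stayed `δ`-far from `y`, the kernel would eventually be at most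
`((1 + cos 2πδ) / 2)^n`, which is exponentially small in `n`: a contradiction for large `n`.
-/

open Filter Real

open Finset Topology FourierTransform

noncomputable def cesaroMean {E : Type*} [AddCommMonoid E] [Module ℝ E] (u : ℕ → E) (N : ℕ) : E :=
  (N : ℝ)⁻¹ • ∑ t ∈ range N, u t

lemma cesaroMean_sum {E ι : Type*} [AddCommMonoid E] [Module ℝ E] (s : Finset ι)
    (u : ι → ℕ → E) (N : ℕ) :
    cesaroMean (fun t => ∑ i ∈ s, u i t) N = ∑ i ∈ s, cesaroMean (u i) N := by
  simp only [cesaroMean, sum_comm (s := range N), smul_sum]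

lemma cesaroMean_const_mul {A : Type*} [NonUnitalNonAssocSemiring A] [Module ℝ A]
    [SMulCommClass ℝ A A] (c : A) (u : ℕ → A) (N : ℕ) :
    cesaroMean (fun t => c * u t) N = c * cesaroMean u N := by
  simp only [cesaroMean, ← mul_sum, mul_smul_comm]

lemma ofReal_cesaroMean (u : ℕ → ℝ) (N : ℕ) :
    ((cesaroMean u N : ℝ) : ℂ) = cesaroMean (fun t => (u t : ℂ)) N := by
  simp [cesaroMean, Complex.real_smul]

lemma Filter.Tendsto.tendsto_cesaroMean {E : Type*} [NormedAddCommGroup E] [NormedSpace ℝ E]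
    {u : ℕ → E} {l : E} (h : Tendsto u atTop (𝓝 l)) : Tendsto (cesaroMean u) atTop (𝓝 l) :=
  h.cesaro_smul

lemma le_of_tendsto_cesaroMean_of_eventually_le {u : ℕ → ℝ} {c b : ℝ}
    (hc : Tendsto (cesaroMean u) atTop (𝓝 c)) (hb : ∀ᶠ t in atTop, u t ≤ b) : c ≤ b := by
  set excess : ℕ → ℝ := fun t => max (u t - b) 0
  have h_excess : Tendsto (cesaroMean excess) atTop (𝓝 0) := by
    refine Tendsto.tendsto_cesaroMean (tendsto_const_nhds.congr' ?_)
    filter_upwards [hb] with t ht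
    simp [excess, ht]
  have h_le : ∀ᶠ N in atTop, cesaroMean u N ≤ b + cesaroMean excess N := by
    filter_upwards [eventually_gt_atTop 0] with N hN
    have hsum : ∑ t ∈ range N, u t ≤ ∑ t ∈ range N, (b + excess t) :=
      sum_le_sum fun t _ => by linarith [le_max_left (u t - b) 0]
    rw [sum_add_distrib, sum_const, card_range, nsmul_eq_mul] at hsum
    have hN' : (0 : ℝ) < N := Nat.cast_pos.mpr hN
    simp only [cesaroMean, smul_eq_mul]
    rw [inv_mul_le_iff₀ hN', mul_add, mul_inv_cancel_left₀ hN'.ne']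
    linarith
  simpa using le_of_tendsto_of_tendsto hc (tendsto_const_nhds.add h_excess) h_le

lemma tendsto_cesaroMean_pow {z : ℂ} (hz : ‖z‖ = 1) :
    Tendsto (cesaroMean (z ^ ·)) atTop (𝓝 (if z = 1 then 1 else 0)) := by
  split_ifs with h1
  · simpa [h1] using (tendsto_const_nhds (x := (1 : ℂ))).tendsto_cesaroMean
  have hz1 : z - 1 ≠ 0 := sub_ne_zero.mpr h1
  refine squeeze_zero_norm (a := fun N : ℕ => (N : ℝ)⁻¹ * (2 / ‖z - 1‖)) (fun N => ?_) ?_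
  · rw [cesaroMean, norm_smul, geom_sum_eq h1, norm_div, norm_inv, Real.norm_natCast]
    gcongr
    calc ‖z ^ N - 1‖ ≤ ‖z ^ N‖ + ‖(1 : ℂ)‖ := norm_sub_le _ _
      _ = 2 := by rw [norm_pow, hz]; norm_num
  · simpa using tendsto_inv_atTop_nhds_zero_nat.mul_const (2 / ‖z - 1‖)

-- Linear independence of `1, θ_1, …, θ_m` over `ℚ`, which is stronger than that of `θ` alone.
def IsRationallyIndependent {ι : Type*} [Fintype ι] (θ : ι → ℝ) : Prop :=
  ∀ k : ι → ℤ, k ≠ 0 → ∀ n : ℤ, ∑ j, (k j : ℝ) * θ j ≠ n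

lemma coe_fourierChar_eq_one_iff (x : ℝ) : (𝐞 x : ℂ) = 1 ↔ ∃ n : ℤ, x = n := by
  rw [Circle.coe_eq_one, fourierChar_apply', Circle.exp_eq_one]
  refine exists_congr fun n => ⟨fun h => ?_, fun h => by rw [h]; ring⟩
  nlinarith [pi_pos]

lemma coe_fourierChar_sum {ι : Type*} (s : Finset ι) (z : ι → ℝ) :
    (𝐞 (∑ i ∈ s, z i) : ℂ) = ∏ i ∈ s, (𝐞 (z i) : ℂ) := by
  simp only [fourierChar_apply, ← Complex.exp_sum, ← sum_mul, Complex.ofReal_sum, mul_sum]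

namespace IsRationallyIndependent

variable {ι : Type*} [Fintype ι] {θ : ι → ℝ}

lemma tendsto_cesaroMean_fourierChar (hθ : IsRationallyIndependent θ) (k : ι → ℤ) :
    Tendsto (cesaroMean fun t => (𝐞 (∑ j, k j * θ j) : ℂ) ^ t) atTop
      (𝓝 (if k = 0 then 1 else 0)) := by
  have h_eq_one : (𝐞 (∑ j, k j * θ j) : ℂ) = 1 ↔ k = 0 := by
    rw [coe_fourierChar_eq_one_iff]
    refine ⟨fun ⟨n, hn⟩ => by_contra fun hk => hθ k hk n hn, ?_⟩
    rintro rfl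
    exact ⟨0, by simp⟩
  rw [← if_congr h_eq_one rfl rfl]
  exact tendsto_cesaroMean_pow (Circle.norm_coe _)

lemma tendsto_cesaroMean_sum_fourierChar (hθ : IsRationallyIndependent θ) {κ : Type*} (s : Finset κ)
    (c : κ → ℂ) (k : κ → ι → ℤ) :
    Tendsto (cesaroMean fun t => ∑ i ∈ s, c i * (𝐞 (∑ j, k i j * θ j) : ℂ) ^ t) atTop
      (𝓝 (∑ i ∈ s, if k i = 0 then c i else 0)) := by
  simp_rw [funext (cesaroMean_sum s _), cesaroMean_const_mul]
  refine tendsto_finsetSum s fun i _ => ?_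
  simpa using (hθ.tendsto_cesaroMean_fourierChar (k i)).const_mul (c i)

end IsRationallyIndependent

noncomputable def cosKernel (n : ℕ) (x : ℝ) : ℝ := ((1 + cos (2 * π * x)) / 2) ^ n

lemma ofReal_cosKernel (n : ℕ) (x : ℝ) :
    (cosKernel n x : ℂ) =
      ∑ r ∈ range (2 * n + 1), ((2 * n).choose r / 4 ^ n : ℂ) * 𝐞 ((r - n : ℝ) * x) := by
  set e : ℂ := (𝐞 x : ℂ)
  have h_cos : (2 * cos (2 * π * x) : ℂ) = e + e⁻¹ := by
    rw [Complex.ofReal_cos, Complex.two_cos, ← Circle.coe_inv, ← AddChar.map_neg_eq_inv]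
    simp only [e, fourierChar_apply]
    push_cast
    ring_nf
  have h_half : ((1 + cos (2 * π * x)) / 2 : ℂ) = e⁻¹ * (e + 1) ^ 2 / 4 := by
    have he : e ≠ 0 := Circle.coe_ne_zero _
    rw [show e⁻¹ * (e + 1) ^ 2 = e + 2 + e⁻¹ by field_simp; ring]
    linear_combination h_cos / 4
  have h_char (r : ℕ) : (𝐞 ((r - n : ℝ) * x) : ℂ) = e ^ r * e⁻¹ ^ n := by
    rw [show (r - n : ℝ) * x = r • x + n • (-x) by simp; ring, AddChar.map_add_eq_mul,
      AddChar.map_nsmul_eq_pow, AddChar.map_nsmul_eq_pow, AddChar.map_neg_eq_inv]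
    simp [e]
  calc (cosKernel n x : ℂ) = ((1 + cos (2 * π * x)) / 2 : ℂ) ^ n := by
        simp [cosKernel]
    _ = e⁻¹ ^ n * (e + 1) ^ (2 * n) / 4 ^ n := by
        rw [h_half, div_pow, mul_pow, pow_mul]
    _ = _ := by
        rw [add_pow, mul_sum, sum_div]
        refine sum_congr rfl fun r _ => ?_
        rw [h_char, one_pow]
        ring

lemma cosKernel_nonneg (n : ℕ) (x : ℝ) : 0 ≤ cosKernel n x :=
  pow_nonneg (by linarith [neg_one_le_cos (2 * π * x)]) n

lemma cosKernel_le_one (n : ℕ) (x : ℝ) : cosKernel n x ≤ 1 :=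
  pow_le_one₀ (by linarith [neg_one_le_cos (2 * π * x)]) (by linarith [cos_le_one (2 * π * x)])

lemma cosKernel_le_of_le_abs_sub_round {n : ℕ} {x δ : ℝ} (hδ₀ : 0 ≤ δ)
    (hδx : δ ≤ |x - round x|) : cosKernel n x ≤ cosKernel n δ := by
  have h_cos : cos (2 * π * x) = cos (2 * π * |x - round x|) := by
    calc cos (2 * π * x) = cos (2 * π * x - round x * (2 * π)) :=
          (cos_sub_int_mul_two_pi _ _).symm
      _ = cos |2 * π * (x - round x)| := by rw [cos_abs]; ring_nf
      _ = cos (2 * π * |x - round x|) := by rw [abs_mul, abs_of_pos two_pi_pos]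
  have h_half := abs_sub_round x
  unfold cosKernel
  gcongr ((1 + ?_) / 2) ^ n
  · linarith [neg_one_le_cos (2 * π * x)]
  rw [h_cos]
  apply cos_le_cos_of_nonneg_of_le_pi <;> nlinarith [pi_pos]

lemma ofReal_prod_cosKernel {ι : Type*} [Fintype ι] [DecidableEq ι] (n : ℕ) (θ y : ι → ℝ)
    (t : ℕ) :
    ((∏ j, cosKernel n (θ j * t - y j) : ℝ) : ℂ) =
      ∑ R ∈ Fintype.piFinset fun _ : ι => range (2 * n + 1),
        (∏ j, ((2 * n).choose (R j) / 4 ^ n : ℂ) * 𝐞 (-((R j - n : ℝ) * y j))) *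
          (𝐞 (∑ j, (((R j : ℤ) - n : ℤ) : ℝ) * θ j) : ℂ) ^ t := by
  have h_char (r : ℕ) (j : ι) : (𝐞 ((r - n : ℝ) * (θ j * t - y j)) : ℂ) =
      𝐞 (-((r - n : ℝ) * y j)) * (𝐞 ((((r : ℤ) - n : ℤ) : ℝ) * θ j) : ℂ) ^ t := by
    rw [← Circle.coe_pow, ← AddChar.map_nsmul_eq_pow, ← Circle.coe_mul,
      ← AddChar.map_add_eq_mul, nsmul_eq_mul]
    push_cast
    ring_nf
  rw [Complex.ofReal_prod]
  simp_rw [ofReal_cosKernel, prod_univ_sum, h_char, coe_fourierChar_sum,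
    ← prod_pow, ← prod_mul_distrib]
  refine sum_congr rfl fun R _ => prod_congr rfl fun j _ => ?_
  ring

lemma IsRationallyIndependent.tendsto_cesaroMean_prod_cosKernel {ι : Type*} [Fintype ι]
    {θ : ι → ℝ} (hθ : IsRationallyIndependent θ) (n : ℕ) (y : ι → ℝ) :
    Tendsto (cesaroMean fun t => ∏ j, cosKernel n (θ j * t - y j)) atTop
      (𝓝 ((((2 * n).choose n : ℝ) / 4 ^ n) ^ Fintype.card ι)) := by
  classical
  rw [← tendsto_ofReal_iff]
  simp_rw [ofReal_cesaroMean, ofReal_prod_cosKernel]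
  convert hθ.tendsto_cesaroMean_sum_fourierChar _ _ (fun (R : ι → ℕ) j => (R j : ℤ) - n) using 2
  rw [sum_eq_single_of_mem (fun _ => n) (by simp; omega)]
  · rw [if_pos (by ext; simp)]
    simp [div_pow]
  · intro R _ hR
    rw [if_neg]
    contrapose! hR
    ext j
    simpa [sub_eq_zero] using congrFun hR j

lemma inv_two_mul_add_one_le_centralBinom_div_four_pow (n : ℕ) :
    ((2 * n + 1 : ℕ) : ℝ)⁻¹ ≤ ((2 * n).choose n : ℝ) / 4 ^ n := by
  rw [inv_eq_one_div, div_le_div_iff₀ (by positivity) (by positivity), one_mul, mul_comm]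
  exact_mod_cast Nat.four_pow_le_two_mul_add_one_mul_central_binom n

lemma exists_pow_lt_centralBinom_div_four_pow_pow {a : ℝ} (ha₀ : 0 ≤ a) (ha₁ : a < 1) (d : ℕ) :
    ∃ n : ℕ, a ^ n < (((2 * n).choose n : ℝ) / 4 ^ n) ^ d := by
  have h_lim := tendsto_pow_const_mul_const_pow_of_abs_lt_one d (abs_lt.mpr ⟨by linarith, ha₁⟩)
  obtain ⟨n, hn_small, hn_pos⟩ :=
    ((h_lim.eventually (gt_mem_nhds (by positivity : (0 : ℝ) < (3 ^ d)⁻¹))).and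
      (eventually_ge_atTop 1)).exists
  refine ⟨n, ?_⟩
  have hn : (1 : ℝ) ≤ n := by exact_mod_cast hn_pos
  calc a ^ n < ((3 * n : ℝ) ^ d)⁻¹ := by
        rw [← one_div, lt_div_iff₀ (by positivity), mul_pow]
        calc a ^ n * (3 ^ d * (n : ℝ) ^ d) = 3 ^ d * ((n : ℝ) ^ d * a ^ n) := by ring
          _ < 3 ^ d * (3 ^ d)⁻¹ := by gcongr
          _ = 1 := mul_inv_cancel₀ (by positivity)
    _ ≤ (((2 * n + 1 : ℕ) : ℝ)⁻¹) ^ d := by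
        rw [← inv_pow]
        gcongr
        push_cast
        linarith
    _ ≤ _ := by
        gcongr
        exact inv_two_mul_add_one_le_centralBinom_div_four_pow n

theorem IsRationallyIndependent.frequently_exists_dist_lt {ι : Type*} [Fintype ι] {θ : ι → ℝ}
    (hθ : IsRationallyIndependent θ) (y : ι → ℝ) {δ : ℝ} (hδ : 0 < δ) :
    ∃ᶠ t : ℕ in atTop, ∃ l : ι → ℤ, dist (fun j => θ j * t - l j) y < δ := by
  wlog hδ_half : δ ≤ 1 / 2 generalizing δ
  · exact (this (by norm_num) le_rfl).mono fun t ⟨l, hl⟩ => ⟨l, hl.trans_le (by linarith)⟩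
  classical
  have h_base_nonneg : 0 ≤ (1 + cos (2 * π * δ)) / 2 := by linarith [neg_one_le_cos (2 * π * δ)]
  have h_base_lt_one : (1 + cos (2 * π * δ)) / 2 < 1 := by
    have := cos_lt_cos_of_nonneg_of_le_pi (x := 0) le_rfl (by nlinarith [pi_pos])
      (by positivity : 0 < 2 * π * δ)
    rw [cos_zero] at this
    linarith
  obtain ⟨n, hn⟩ :=
    exists_pow_lt_centralBinom_div_four_pow_pow h_base_nonneg h_base_lt_one (Fintype.card ι)
  by_contra h_never
  rw [not_frequently] at h_never
  have h_far : ∀ᶠ t : ℕ in atTop, ∏ j, cosKernel n (θ j * t - y j) ≤ cosKernel n δ := by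
    filter_upwards [h_never] with t ht
    obtain ⟨j, hj⟩ : ∃ j, δ ≤ |θ j * t - y j - round (θ j * t - y j)| := by
      by_contra! h_near
      refine ht ⟨fun j => round (θ j * t - y j), (dist_pi_lt_iff hδ).2 fun j => ?_⟩
      rw [Real.dist_eq, sub_right_comm]
      exact h_near j
    rw [← mul_prod_erase univ _ (mem_univ j)]
    calc cosKernel n (θ j * t - y j) * ∏ i ∈ univ.erase j, cosKernel n (θ i * t - y i)
        ≤ cosKernel n (θ j * t - y j) :=
          mul_le_of_le_one_right (cosKernel_nonneg _ _)
            (prod_le_one (fun _ _ => cosKernel_nonneg _ _) fun _ _ => cosKernel_le_one _ _)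
      _ ≤ cosKernel n δ := cosKernel_le_of_le_abs_sub_round hδ.le hj
  exact (le_of_tendsto_cesaroMean_of_eventually_le
    (hθ.tendsto_cesaroMean_prod_cosKernel n y) h_far).not_gt hn

lemma Filter.liminf_eq_zero_of_frequently_lt {α : Type*} {f : Filter α} {u : α → ℝ}
    (h_nonneg : ∀ x, 0 ≤ u x) (h_small : ∀ ε > 0, ∃ᶠ x in f, u x < ε) : liminf u f = 0 := by
  have h_cobdd : IsCoboundedUnder (· ≥ ·) f u :=
    IsCoboundedUnder.of_frequently_le ((h_small 1 one_pos).mono fun _ hx => hx.le)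
  have h_bdd : IsBoundedUnder (· ≥ ·) f u := ⟨0, eventually_map.2 (.of_forall h_nonneg)⟩
  refine le_antisymm (le_of_forall_pos_le_add fun ε hε => ?_)
    (le_liminf_of_le h_cobdd (.of_forall h_nonneg))
  simpa using liminf_le_of_frequently_le ((h_small ε hε).mono fun _ hx => hx.le) h_bdd

lemma exists_mul_cos_add_mul_sin_eq_zero (a b : ℝ) : ∃ y, a * cos y + b * sin y = 0 := by
  set z : ℂ := ⟨b, -a⟩
  refine ⟨Complex.arg z, ?_⟩
  have h : ‖z‖ * (a * cos (Complex.arg z) + b * sin (Complex.arg z)) = 0 := by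
    linear_combination a * Complex.norm_mul_cos_arg z + b * Complex.norm_mul_sin_arg z
  rcases mul_eq_zero.1 h with hz | h
  · obtain ⟨hb, ha⟩ : b = 0 ∧ -a = 0 := by simpa [z, Complex.ext_iff] using hz
    simp [hb, neg_eq_zero.1 ha]
  · exact h

theorem liminf_trigonometric_sum_eq_zero_general (m : ℕ)
    (θ : Fin m → ℝ)
    (hindep : ∀ k : Fin m → ℤ, k ≠ 0 → ∀ n : ℤ, (∑ j, (k j : ℝ) * θ j) ≠ (n : ℝ))
    (α β : Fin m → ℝ) :
    Filter.liminf
      (fun t : ℕ =>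
        |∑ j, (α j * Real.cos (2 * π * θ j * t) + β j * Real.sin (2 * π * θ j * t))|)
      atTop = 0 := by
  set g : (Fin m → ℝ) → ℝ := fun x => ∑ j, (α j * cos (2 * π * x j) + β j * sin (2 * π * x j))
  have hg_periodic (x : Fin m → ℝ) (l : Fin m → ℤ) : g (fun j => x j - l j) = g x := by
    refine sum_congr rfl fun j _ => ?_
    rw [show 2 * π * (x j - l j) = 2 * π * x j - l j * (2 * π) by ring,
      cos_sub_int_mul_two_pi, sin_sub_int_mul_two_pi]
  choose z hz using fun j => exists_mul_cos_add_mul_sin_eq_zero (α j) (β j)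
  set y : Fin m → ℝ := fun j => z j / (2 * π)
  have hg_zero : g y = 0 :=
    sum_eq_zero fun j _ => by rw [mul_div_cancel₀ _ two_pi_pos.ne', hz]
  have hg_cont : Continuous g := by fun_prop
  refine liminf_eq_zero_of_frequently_lt (fun _ => abs_nonneg _) fun ε hε => ?_
  obtain ⟨δ, hδ, hgδ⟩ := Metric.continuous_iff.1 hg_cont y ε hε
  refine (IsRationallyIndependent.frequently_exists_dist_lt hindep y hδ).mono fun t ⟨l, hl⟩ => ?_
  have h_small := hgδ _ hl
  rw [hg_periodic (fun j => θ j * t), hg_zero, Real.dist_eq, sub_zero] at h_small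
  simpa only [g, mul_assoc] using h_small

/-- If θ₁,…,θ_m ∈ [0,1) are rationally independent (k₁θ₁ + ⋯ + k_mθ_m ∉ ℤ for every
nonzero integer vector k) and (α_j, β_j) ≠ (0,0) for each j, then the sequence
v_t = Σ_j (α_j cos(2πθ_j t) + β_j sin(2πθ_j t)) satisfies liminf_{t→∞} |v_t| = 0. -/
theorem liminf_trigonometric_sum_eq_zero (m : ℕ) (hm : 1 ≤ m)
    (θ : Fin m → ℝ) (hθ : ∀ j, θ j ∈ Set.Ico (0 : ℝ) 1)
    (hindep : ∀ k : Fin m → ℤ, k ≠ 0 → ∀ n : ℤ, (∑ j, (k j : ℝ) * θ j) ≠ (n : ℝ))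
    (α β : Fin m → ℝ) (hαβ : ∀ j, (α j, β j) ≠ (0, 0)) :
    Filter.liminf
      (fun t : ℕ =>
        |∑ j, (α j * Real.cos (2 * π * θ j * t) + β j * Real.sin (2 * π * θ j * t))|)
      atTop = 0 :=
  liminf_trigonometric_sum_eq_zero_general m θ hindep α β
end

section
/- For any m ∈ ℝ and σ² ∈ (0, +∞), d_TV( N(m, σ²), N(0, σ²) ) = (2/√(2π)) ∫_0^{|m|/(2σ)} e^{−x²/2} dx, and consequently d_TV( N(m, σ²), N(0, σ²) ) ≤ |m| / (σ √(2π)). -/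
open MeasureTheory ProbabilityTheory Filter Real

/-- The Gaussian distribution on ℝ with mean `m` and variance `v ≥ 0`. -/
noncomputable def gauss (m v : ℝ) : Measure ℝ := gaussianReal m v.toNNReal

/-- Total variation distance between two measures on ℝ:
`d_TV(μ,ν) = sup_{A measurable} |μ(A) − ν(A)|`. -/
noncomputable def dTV (μ ν : Measure ℝ) : ℝ :=
  ⨆ A : {A : Set ℝ // MeasurableSet A}, |(μ A.1).toReal - (ν A.1).toReal|

/-
Both densities are Gaussians of the same variance, so `N(m,σ²)` has the larger density exactly on
the side of the midpoint `m/2` containing `m`. Scheffé's argument then shows that the supremum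
defining `d_TV` is attained at the half-line `(m/2, ∞)` when `m ≥ 0`; the reflection `x ↦ -x`
reduces `m < 0` to `|m|`. Translating by `m` turns the difference of the two masses of that
half-line into the `N(0,σ²)`-mass of `(-m/2, m/2]`; rescaling to the standard normal and using the
evenness of its density gives the integral, and `e^{-x²/2} ≤ 1` gives the bound.
-/

section SetIntegral

variable {α : Type*} [MeasurableSpace α] {μ : Measure α} {S A : Set α}

theorem setIntegral_le_setIntegral_of_nonneg_of_nonpos_compl {h : α → ℝ} (hh : Integrable h μ)
    (hS : MeasurableSet S) (hA : MeasurableSet A) (h_nonneg : ∀ x ∈ S, 0 ≤ h x)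
    (h_nonpos : ∀ x ∉ S, h x ≤ 0) :
    ∫ x in A, h x ∂μ ≤ ∫ x in S, h x ∂μ := by
  have h_out : ∫ x in A \ S, h x ∂μ ≤ 0 :=
    setIntegral_nonpos (hA.diff hS) fun x hx => h_nonpos x hx.2
  have h_in : ∫ x in A ∩ S, h x ∂μ ≤ ∫ x in S, h x ∂μ :=
    setIntegral_mono_set hh.integrableOn
      ((ae_restrict_iff' hS).2 (ae_of_all _ h_nonneg)) Set.inter_subset_right.eventuallyLE
  rw [← integral_inter_add_sdiff hS hh.integrableOn]
  linarith

theorem abs_setIntegral_sub_le {f g : α → ℝ} (hf : Integrable f μ) (hg : Integrable g μ)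
    (hfg : ∫ x, f x ∂μ = ∫ x, g x ∂μ) (hS : MeasurableSet S) (hA : MeasurableSet A)
    (h_le : ∀ x ∈ S, g x ≤ f x) (h_ge : ∀ x ∉ S, f x ≤ g x) :
    |∫ x in A, f x ∂μ - ∫ x in A, g x ∂μ| ≤ ∫ x in S, f x ∂μ - ∫ x in S, g x ∂μ := by
  have h_compl : ∫ x in Sᶜ, (g x - f x) ∂μ = ∫ x in S, f x ∂μ - ∫ x in S, g x ∂μ := by
    have := integral_add_compl (f := fun x => g x - f x) hS (hg.sub hf)
    rw [integral_sub hg hf, hfg, sub_self, integral_sub hg.integrableOn hf.integrableOn] at this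
    linarith
  rw [abs_sub_le_iff]
  constructor
  · rw [← integral_sub hf.integrableOn hg.integrableOn,
      ← integral_sub hf.integrableOn hg.integrableOn]
    exact setIntegral_le_setIntegral_of_nonneg_of_nonpos_compl (hf.sub hg) hS hA
      (fun x hx => sub_nonneg.2 (h_le x hx)) fun x hx => sub_nonpos.2 (h_ge x hx)
  · rw [← h_compl, ← integral_sub hg.integrableOn hf.integrableOn]
    exact setIntegral_le_setIntegral_of_nonneg_of_nonpos_compl (hg.sub hf) hS.compl hA
      (fun x hx => sub_nonneg.2 (h_ge x hx)) fun x hx => sub_nonpos.2 (h_le x (not_not.1 hx))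

end SetIntegral

theorem intervalIntegral_neg_self_of_even {f : ℝ → ℝ} {c : ℝ} (hf : ∀ x, f (-x) = f x)
    (hfi : IntervalIntegrable f volume (-c) c) :
    ∫ x in -c..c, f x = 2 * ∫ x in 0..c, f x := by
  have h_zero : (0 : ℝ) ∈ Set.uIcc (-c) c := by
    rcases le_total 0 c with hc | hc <;> simp [hc]
  have h_left : IntervalIntegrable f volume (-c) 0 :=
    hfi.mono_set (Set.uIcc_subset_uIcc_left h_zero)
  have h_right : IntervalIntegrable f volume 0 c :=
    hfi.mono_set (Set.uIcc_subset_uIcc_right h_zero)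
  have h_reflect : ∫ x in -c..0, f x = ∫ x in 0..c, f x := by
    simpa [hf] using (intervalIntegral.integral_comp_neg (a := 0) (b := c) f).symm
  rw [← intervalIntegral.integral_add_adjacent_intervals h_left h_right, h_reflect, two_mul]

section TotalVariation

instance : Nonempty {A : Set ℝ // MeasurableSet A} := ⟨⟨∅, .empty⟩⟩

theorem dTV_eq_of_forall_le {μ ν : Measure ℝ} {S : Set ℝ} (hS : MeasurableSet S)
    (h : ∀ A, MeasurableSet A →
      |(μ A).toReal - (ν A).toReal| ≤ |(μ S).toReal - (ν S).toReal|) :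
    dTV μ ν = |(μ S).toReal - (ν S).toReal| :=
  le_antisymm (ciSup_le fun A => h A.1 A.2)
    (le_ciSup (f := fun A : {A : Set ℝ // MeasurableSet A} => |(μ A.1).toReal - (ν A.1).toReal|)
      ⟨_, by rintro _ ⟨A, rfl⟩; exact h A.1 A.2⟩ ⟨S, hS⟩)

theorem dTV_eq_setIntegral_sub {μ ν : Measure ℝ} {f g : ℝ → ℝ} (hf : Integrable f)
    (hg : Integrable g) (hμ : ∀ A, MeasurableSet A → (μ A).toReal = ∫ x in A, f x)
    (hν : ∀ A, MeasurableSet A → (ν A).toReal = ∫ x in A, g x) (hfg : ∫ x, f x = ∫ x, g x)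
    {S : Set ℝ} (hS : MeasurableSet S) (h_le : ∀ x ∈ S, g x ≤ f x)
    (h_ge : ∀ x ∉ S, f x ≤ g x) :
    dTV μ ν = |(μ S).toReal - (ν S).toReal| := by
  refine dTV_eq_of_forall_le hS fun A hA => ?_
  rw [hμ A hA, hν A hA, hμ S hS, hν S hS]
  exact (abs_setIntegral_sub_le hf hg hfg hS hA h_le h_ge).trans (le_abs_self _)

theorem dTV_map_measurableEquiv (μ ν : Measure ℝ) (e : ℝ ≃ᵐ ℝ) :
    dTV (μ.map e) (ν.map e) = dTV μ ν := by
  let preimageEquiv : {A : Set ℝ // MeasurableSet A} ≃ {A : Set ℝ // MeasurableSet A} :=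
    { toFun := fun A => ⟨e ⁻¹' A, e.measurable A.2⟩
      invFun := fun A => ⟨e.symm ⁻¹' A, e.symm.measurable A.2⟩
      left_inv := fun A => Subtype.ext (e.symm_preimage_preimage A)
      right_inv := fun A => Subtype.ext (e.toEquiv.preimage_symm_preimage A) }
  simp only [dTV, e.map_apply]
  exact preimageEquiv.iSup_comp (g := fun A => |(μ A.1).toReal - (ν A.1).toReal|)

end TotalVariation

theorem gaussianPDFReal_le_gaussianPDFReal {a b x : ℝ} (V : NNReal) (h : |x - b| ≤ |x - a|) :
    gaussianPDFReal a V x ≤ gaussianPDFReal b V x := by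
  simp only [gaussianPDFReal]
  gcongr _ * exp (-?_ / _)
  exact sq_le_sq.2 h

section Gauss

variable {m v : ℝ}

instance : IsProbabilityMeasure (gauss m v) := by
  unfold gauss; infer_instance

theorem gauss_apply_toReal (m : ℝ) (hv : 0 < v) (A : Set ℝ) :
    (gauss m v A).toReal = ∫ x in A, gaussianPDFReal m v.toNNReal x := by
  rw [gauss, gaussianReal_apply_eq_integral m (by simpa using hv) A,
    ENNReal.toReal_ofReal (integral_nonneg fun x => gaussianPDFReal_nonneg _ _ _)]

theorem dTV_gauss_eq_of_nonneg (hm : 0 ≤ m) (hv : 0 < v) :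
    dTV (gauss m v) (gauss 0 v) =
      |(gauss m v (Set.Ioi (m / 2))).toReal - (gauss 0 v (Set.Ioi (m / 2))).toReal| := by
  have hV : v.toNNReal ≠ 0 := by simpa using hv
  refine dTV_eq_setIntegral_sub (integrable_gaussianPDFReal m _) (integrable_gaussianPDFReal 0 _)
    (fun A _ => gauss_apply_toReal m hv A) (fun A _ => gauss_apply_toReal 0 hv A)
    (by rw [integral_gaussianPDFReal_eq_one m hV, integral_gaussianPDFReal_eq_one 0 hV])
    measurableSet_Ioi (fun x hx => ?_) fun x hx => ?_
  · have hx : m / 2 < x := hx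
    exact gaussianPDFReal_le_gaussianPDFReal _ (sq_le_sq.1 (by nlinarith))
  · have hx : x ≤ m / 2 := not_lt.1 hx
    exact gaussianPDFReal_le_gaussianPDFReal _ (sq_le_sq.1 (by nlinarith))

theorem gauss_map_add_const (y : ℝ) : (gauss m v).map (· + y) = gauss (m + y) v :=
  gaussianReal_map_add_const y

theorem gauss_zero_eq_map_const_mul (hv : 0 < v) :
    gauss 0 v = (gaussianReal 0 1).map (√v * ·) := by
  rw [gaussianReal_map_const_mul, mul_zero, mul_one, gauss]
  congr
  ext
  simp [hv.le]

theorem gauss_Ioi_sub_gauss_Ioi (hm : 0 ≤ m) :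
    (gauss m v (Set.Ioi (m / 2))).toReal - (gauss 0 v (Set.Ioi (m / 2))).toReal =
      (gauss 0 v (Set.Ioc (-(m / 2)) (m / 2))).toReal := by
  have h_shift : gauss m v (Set.Ioi (m / 2)) = gauss 0 v (Set.Ioi (-(m / 2))) := by
    rw [← zero_add m, ← gauss_map_add_const, Measure.map_apply (measurable_add_const m)
      measurableSet_Ioi, zero_add, Set.preimage_add_const_Ioi]
    ring_nf
  rw [h_shift, ← measureReal_def, ← measureReal_def, ← measureReal_def, ← Set.Ioi_sdiff_Ioi,
    measureReal_sdiff (Set.Ioi_subset_Ioi (by linarith)) measurableSet_Ioi]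

theorem gauss_zero_Ioc_neg_self {a : ℝ} (ha : 0 ≤ a) (hv : 0 < v) :
    (gauss 0 v (Set.Ioc (-a) a)).toReal =
      2 / √(2 * π) * ∫ x in 0..a / √v, exp (-x ^ 2 / 2) := by
  have hσ : 0 < √v := sqrt_pos.2 hv
  have h_pdf : ∀ x, gaussianPDFReal 0 1 x = (√(2 * π))⁻¹ * exp (-x ^ 2 / 2) := by
    simp [gaussianPDFReal]
  rw [gauss_zero_eq_map_const_mul hv, Measure.map_apply (measurable_const_mul _) measurableSet_Ioc,
    Set.preimage_const_mul_Ioc₀ _ _ hσ, gaussianReal_apply_eq_integral 0 one_ne_zero,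
    ENNReal.toReal_ofReal (integral_nonneg fun x => gaussianPDFReal_nonneg _ _ _), neg_div,
    ← intervalIntegral.integral_of_le (by linarith [div_nonneg ha hσ.le]),
    intervalIntegral_neg_self_of_even (fun x => by simp [gaussianPDFReal])
      (integrable_gaussianPDFReal 0 1).intervalIntegrable]
  simp_rw [h_pdf, intervalIntegral.integral_const_mul]
  ring

theorem dTV_gauss_abs : dTV (gauss m v) (gauss 0 v) = dTV (gauss |m| v) (gauss 0 v) := by
  rcases le_total 0 m with hm | hm
  · rw [abs_of_nonneg hm]
  · have h_neg (a : ℝ) : (gauss a v).map (MeasurableEquiv.neg ℝ) = gauss (-a) v :=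
      gaussianReal_map_neg
    rw [abs_of_nonpos hm, ← dTV_map_measurableEquiv _ _ (MeasurableEquiv.neg ℝ), h_neg, h_neg,
      neg_zero]

end Gauss

theorem intervalIntegral_exp_neg_sq_div_two_le {c : ℝ} (hc : 0 ≤ c) :
    ∫ x in 0..c, exp (-x ^ 2 / 2) ≤ c := by
  have h := intervalIntegral.integral_mono_on hc
    ((by fun_prop : Continuous fun x : ℝ => exp (-x ^ 2 / 2)).intervalIntegrable 0 c)
    (intervalIntegrable_const (μ := volume))
    fun x _ => exp_le_one_iff.2 (by nlinarith [sq_nonneg x] : -x ^ 2 / 2 ≤ 0)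
  simpa using h

/-- For any m ∈ ℝ and σ² ∈ (0,+∞),
d_TV(N(m,σ²), N(0,σ²)) = (2/√(2π)) ∫_0^{|m|/(2σ)} e^{−x²/2} dx ≤ |m|/(σ√(2π)). -/
theorem tv_gaussian_mean_formula (m v : ℝ) (hv : 0 < v) :
    (dTV (gauss m v) (gauss 0 v) =
      2 / Real.sqrt (2 * π) *
        ∫ x in (0 : ℝ)..(|m| / (2 * Real.sqrt v)), Real.exp (-x ^ 2 / 2)) ∧
    dTV (gauss m v) (gauss 0 v) ≤ |m| / (Real.sqrt v * Real.sqrt (2 * π)) := by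
  have h_formula : dTV (gauss m v) (gauss 0 v) =
      2 / √(2 * π) * ∫ x in 0..|m| / (2 * √v), exp (-x ^ 2 / 2) := by
    rw [dTV_gauss_abs, dTV_gauss_eq_of_nonneg (abs_nonneg m) hv,
      gauss_Ioi_sub_gauss_Ioi (abs_nonneg m), abs_of_nonneg ENNReal.toReal_nonneg,
      gauss_zero_Ioc_neg_self (by positivity) hv, div_div]
  refine ⟨h_formula, ?_⟩
  calc dTV (gauss m v) (gauss 0 v)
      ≤ 2 / √(2 * π) * (|m| / (2 * √v)) := by
        rw [h_formula]
        gcongr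
        exact intervalIntegral_exp_neg_sq_div_two_le (by positivity)
    _ = |m| / (√v * √(2 * π)) := by
        field_simp
end

section
/- For any σ² ∈ (0,1) ∪ (1, +∞), setting x(σ) = σ·( ln(σ²)/(σ² − 1) )^{1/2}, one has d_TV( N(0, σ²), N(0, 1) ) = (2/√(2π)) ∫_{min{x(σ), x(σ)/σ}}^{max{x(σ), x(σ)/σ}} e^{−x²/2} dx ≤ (2/√(2π)) · x(σ) · |1/σ − 1|. Moreover, lim_{σ² → 1} x(σ) = 1. -/
open MeasureTheory ProbabilityTheory Filter Real

/-- The quantity x(σ) = σ·(ln(σ²)/(σ²−1))^{1/2}, written as a function of the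
variance v = σ². -/
noncomputable def xSig (v : ℝ) : ℝ := Real.sqrt v * Real.sqrt (Real.log v / (v - 1))

lemma abs_diff_le_aux {f g : ℝ → ℝ} (hf : Integrable f) (hg : Integrable g)
    (hfg : ∫ x, f x = ∫ x, g x) (hS : MeasurableSet {x | g x < f x})
    {A : Set ℝ} (hA : MeasurableSet A) :
    |(∫ x in A, f x) - ∫ x in A, g x| ≤ ∫ x in {x | g x < f x}, (f x - g x) := by
  set S := {x | g x < f x} with hSdef
  set h := fun x => max (f x - g x) 0 with hhdef
  have hsub : Integrable (fun x => f x - g x) := hf.sub hg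
  have hh : Integrable h := hsub.pos_part
  have h2 : Integrable (fun x => max (g x - f x) 0) := (hg.sub hf).pos_part
  have key : ∫ x, h x = ∫ x in S, (f x - g x) := by
    rw [← integral_add_compl hS hh]
    have e1 : ∫ x in S, h x = ∫ x in S, (f x - g x) := by
      refine setIntegral_congr_fun hS fun x hx => ?_
      have : g x < f x := hx
      simp [hhdef, max_eq_left, sub_nonneg, this.le]
    have e2 : ∫ x in Sᶜ, h x = 0 := by
      rw [setIntegral_congr_fun hS.compl (g := fun _ => (0:ℝ)) fun x hx => ?_, integral_zero]
      have : ¬ (g x < f x) := hx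
      simp only [hhdef, max_eq_right, sub_nonpos, not_lt.mp this]
    rw [e1, e2, add_zero]
  have key2 : ∫ x, max (g x - f x) 0 = ∫ x in S, (f x - g x) := by
    have h0 : ∫ x, (h x - max (g x - f x) 0) = 0 := by
      have : (fun x => h x - max (g x - f x) 0) = fun x => f x - g x := by
        funext x; simp only [hhdef]; rcases le_total (f x) (g x) with h' | h' <;>
          simp [max_eq_left, max_eq_right, sub_nonneg, sub_nonpos, h']
      rw [this, integral_sub hf hg, hfg, sub_self]
    rw [integral_sub hh h2] at h0
    linarith [key]
  rw [abs_sub_le_iff]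
  constructor
  · rw [← integral_sub hf.integrableOn hg.integrableOn, ← key]
    calc ∫ x in A, (f x - g x) ≤ ∫ x in A, h x :=
          setIntegral_mono_on hsub.integrableOn hh.integrableOn hA fun x _ => le_max_left _ _
      _ ≤ ∫ x, h x := setIntegral_le_integral hh (ae_of_all _ fun x => le_max_right _ _)
  · rw [← integral_sub hg.integrableOn hf.integrableOn, ← key2]
    calc ∫ x in A, (g x - f x) ≤ ∫ x in A, max (g x - f x) 0 :=
          setIntegral_mono_on (hg.sub hf).integrableOn h2.integrableOn hA fun x _ =>
            le_max_left _ _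
      _ ≤ ∫ x, max (g x - f x) 0 :=
          setIntegral_le_integral h2 (ae_of_all _ fun x => le_max_right _ _)

lemma dTV_eq_density {f g : ℝ → ℝ} {μ ν : Measure ℝ} (hf : Integrable f) (hg : Integrable g)
    (hfg : ∫ x, f x = ∫ x, g x) (hS : MeasurableSet {x | g x < f x})
    (hμ : ∀ A : Set ℝ, MeasurableSet A → (μ A).toReal = ∫ x in A, f x)
    (hν : ∀ A : Set ℝ, MeasurableSet A → (ν A).toReal = ∫ x in A, g x) :
    dTV μ ν = ∫ x in {x | g x < f x}, (f x - g x) := by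
  haveI : Nonempty {A : Set ℝ // MeasurableSet A} := ⟨⟨∅, MeasurableSet.empty⟩⟩
  set S := {x | g x < f x} with hSdef
  have hbound : ∀ A : {A : Set ℝ // MeasurableSet A},
      |(μ A.1).toReal - (ν A.1).toReal| ≤ ∫ x in S, (f x - g x) := by
    intro A
    rw [hμ _ A.2, hν _ A.2]
    exact abs_diff_le_aux hf hg hfg hS A.2
  refine le_antisymm (ciSup_le hbound) ?_
  have hval : |(μ S).toReal - (ν S).toReal| = ∫ x in S, (f x - g x) := by
    rw [hμ _ hS, hν _ hS, ← integral_sub hf.integrableOn hg.integrableOn]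
    exact abs_of_nonneg (setIntegral_nonneg hS fun x hx => by
      have : g x < f x := hx; linarith)
  rw [← hval]
  exact le_ciSup ⟨_, Set.forall_mem_range.mpr hbound⟩ (⟨S, hS⟩ : {A : Set ℝ // MeasurableSet A})

lemma sym_integral (p q : ℝ) :
    (∫ x in (-q)..q, rexp (-x^2/2)) - ∫ x in (-p)..p, rexp (-x^2/2)
      = 2 * ∫ x in p..q, rexp (-x^2/2) := by
  have hE : Continuous fun x : ℝ => rexp (-x^2/2) := by continuity
  have hint : ∀ a b : ℝ, IntervalIntegrable (fun x => rexp (-x^2/2)) volume a b :=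
    fun a b => hE.intervalIntegrable a b
  have h1 : (∫ x in (-q)..(-p), rexp (-x^2/2)) + ∫ x in (-p)..p, rexp (-x^2/2)
      = ∫ x in (-q)..p, rexp (-x^2/2) :=
    intervalIntegral.integral_add_adjacent_intervals (hint _ _) (hint _ _)
  have h2 : (∫ x in (-q)..p, rexp (-x^2/2)) + ∫ x in p..q, rexp (-x^2/2)
      = ∫ x in (-q)..q, rexp (-x^2/2) :=
    intervalIntegral.integral_add_adjacent_intervals (hint _ _) (hint _ _)
  have h3 : (∫ x in (-q)..(-p), rexp (-x^2/2)) = ∫ x in p..q, rexp (-x^2/2) := by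
    rw [← intervalIntegral.integral_comp_neg (fun x => rexp (-x^2/2))]
    simp [neg_sq]
  linarith

lemma subst_integral {v : ℝ} (hv : 0 < v) (b : ℝ) :
    ∫ x in (-b)..b, rexp (-x^2/(2*v))
      = Real.sqrt v * ∫ u in (-(b/Real.sqrt v))..(b/Real.sqrt v), rexp (-u^2/2) := by
  have hs : Real.sqrt v ≠ 0 := (Real.sqrt_pos.mpr hv).ne'
  have h := intervalIntegral.integral_comp_mul_left (a := -(b/Real.sqrt v)) (b := b/Real.sqrt v)
    (fun x => rexp (-x^2/(2*v))) (c := Real.sqrt v)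
  have e : ∀ u : ℝ, rexp (-(Real.sqrt v * u)^2/(2*v)) = rexp (-u^2/2) := by
    intro u
    rw [mul_pow, Real.sq_sqrt hv.le]
    congr 1; field_simp
  simp only [e] at h
  replace h := h hs
  rw [mul_neg, mul_div_cancel₀ _ hs] at h
  rw [h, smul_eq_mul, ← mul_assoc, mul_inv_cancel₀ hs, one_mul]

lemma density_lt_iff {v : ℝ} (hv : 0 < v) (x : ℝ) :
    (Real.sqrt (2*π))⁻¹ * rexp (-x^2/2) < (Real.sqrt (2*π*v))⁻¹ * rexp (-x^2/(2*v))
      ↔ v * Real.log v < x^2 * (v - 1) := by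
  have hpos1 : (0:ℝ) < Real.sqrt (2*π) := Real.sqrt_pos.mpr (by positivity)
  have hpos2 : (0:ℝ) < Real.sqrt (2*π*v) := Real.sqrt_pos.mpr (by positivity)
  have e1 : (Real.sqrt (2*π))⁻¹ = rexp (-(Real.log (Real.sqrt (2*π)))) := by
    rw [Real.exp_neg, Real.exp_log hpos1]
  have e2 : (Real.sqrt (2*π*v))⁻¹ = rexp (-(Real.log (Real.sqrt (2*π*v)))) := by
    rw [Real.exp_neg, Real.exp_log hpos2]
  rw [e1, e2, ← Real.exp_add, ← Real.exp_add, Real.exp_lt_exp]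
  rw [Real.log_sqrt (by positivity), Real.log_sqrt (by positivity),
    Real.log_mul (by positivity) hv.ne']
  have h2v : (0:ℝ) < 2*v := by positivity
  have e1' : -x ^ 2 / (2*v) = -(x^2/(2*v)) := neg_div _ _
  have e2' : -x ^ 2 / 2 = -(x^2/2) := neg_div _ _
  constructor
  · intro h
    have h' : x^2/(2*v) < x^2/2 - Real.log v / 2 := by linarith
    have h2 := (div_lt_iff₀ h2v).mp h'
    nlinarith
  · intro h
    have h' : x^2/(2*v) < x^2/2 - Real.log v / 2 := by
      rw [div_lt_iff₀ h2v]; nlinarith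
    linarith

lemma key_calc {v : ℝ} (hv : 0 < v) (hv1 : v ≠ 1) (F G : ℝ → ℝ)
    (hF : F = fun x => (Real.sqrt (2*π*v))⁻¹ * rexp (-x^2/(2*v)))
    (hG : G = fun x => (Real.sqrt (2*π))⁻¹ * rexp (-x^2/2))
    (hFi : Integrable F) (hGi : Integrable G)
    (hFint : ∫ x, F x = 1) (hGint : ∫ x, G x = 1) :
    ∫ x in {x | G x < F x}, (F x - G x)
      = 2 / Real.sqrt (2*π) *
        ∫ x in (min (xSig v) (xSig v / Real.sqrt v))..(max (xSig v) (xSig v / Real.sqrt v)),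
          rexp (-x^2/2) := by
  have hsv : (0:ℝ) < Real.sqrt v := Real.sqrt_pos.mpr hv
  set b := xSig v with hbdef
  have hrnn : 0 ≤ Real.log v / (v - 1) := by
    rcases lt_or_gt_of_ne hv1 with h | h
    · exact div_nonneg_iff.mpr (Or.inr ⟨Real.log_nonpos hv.le h.le, by linarith⟩)
    · exact div_nonneg (Real.log_nonneg h.le) (by linarith)
  have hbnn : 0 ≤ b := mul_nonneg (Real.sqrt_nonneg _) (Real.sqrt_nonneg _)
  have hb2 : b^2 = v * (Real.log v / (v-1)) := by
    rw [hbdef, xSig, mul_pow, Real.sq_sqrt hv.le, Real.sq_sqrt hrnn]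
  have hchar : ∀ x, (G x < F x ↔ v * Real.log v < x^2 * (v-1)) := fun x => by
    rw [hF, hG]; exact density_lt_iff hv x
  have hFcont : Continuous F := by rw [hF]; fun_prop
  have hGcont : Continuous G := by rw [hG]; fun_prop
  have hS : MeasurableSet {x | G x < F x} :=
    measurableSet_lt hGcont.measurable hFcont.measurable
  have hEcont : Continuous fun x : ℝ => rexp (-x^2/2) := by fun_prop
  have hIG : ∀ c : ℝ,
      (∫ x in (-c)..c, G x) = (Real.sqrt (2*π))⁻¹ * ∫ x in (-c)..c, rexp (-x^2/2) := by
    intro c; rw [hG]; exact intervalIntegral.integral_const_mul _ _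
  have hIF : ∀ c : ℝ, (∫ x in (-c)..c, F x)
      = (Real.sqrt (2*π))⁻¹ * ∫ x in (-(c/Real.sqrt v))..(c/Real.sqrt v), rexp (-x^2/2) := by
    intro c
    rw [hF]
    rw [intervalIntegral.integral_const_mul, subst_integral hv c, ← mul_assoc]
    congr 1
    rw [Real.sqrt_mul (by positivity : (0:ℝ) ≤ 2*π) v, mul_inv, mul_assoc,
      inv_mul_cancel₀ hsv.ne', mul_one]
  have htot : ∫ x, (F x - G x) = 0 := by
    rw [integral_sub hFi hGi, hFint, hGint, sub_self]
  have hsplit := integral_add_compl hS (hFi.sub hGi)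
  have hb2' : v * Real.log v = b^2 * (v-1) := by
    rw [hb2]
    have : v - 1 ≠ 0 := sub_ne_zero.mpr hv1
    field_simp
  rcases lt_or_gt_of_ne hv1 with hcase | hcase
  · -- v < 1 : the favourable set is Ioo (-b) b, and b ≤ b / √v
    have hv1' : v - 1 < 0 := by linarith
    have hsv1 : Real.sqrt v ≤ 1 := Real.sqrt_le_one.mpr hcase.le
    have hab : b ≤ b / Real.sqrt v := by
      rw [le_div_iff₀ hsv]; nlinarith
    have hSeq : {x | G x < F x} = Set.Ioo (-b) b := by
      ext x
      simp only [Set.mem_setOf_eq, Set.mem_Ioo]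
      rw [hchar x]
      constructor
      · intro h
        have hx2 : x^2 < b^2 := by nlinarith
        exact abs_lt_of_sq_lt_sq' hx2 hbnn
      · rintro ⟨h1, h2⟩
        have hx2 : x^2 < b^2 := sq_lt_sq' h1 h2
        nlinarith
    have hval : ∫ x in {x | G x < F x}, (F x - G x)
        = (∫ x in (-b)..b, F x) - ∫ x in (-b)..b, G x := by
      rw [hSeq, ← integral_Ioc_eq_integral_Ioo,
        ← intervalIntegral.integral_of_le (by linarith : -b ≤ b),
        intervalIntegral.integral_sub (hFcont.intervalIntegrable _ _)
          (hGcont.intervalIntegrable _ _)]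
    rw [hval, hIF b, hIG b,
      min_eq_left hab, max_eq_right hab]
    have h2 := sym_integral b (b / Real.sqrt v)
    linear_combination (Real.sqrt (2*π))⁻¹ * h2
  · -- 1 < v : the favourable set is the complement of Icc (-b) b, and b/√v ≤ b
    have hv1' : (0:ℝ) < v - 1 := by linarith
    have hsv1 : (1:ℝ) ≤ Real.sqrt v := Real.one_le_sqrt.mpr hcase.le
    have hab : b / Real.sqrt v ≤ b := div_le_self hbnn hsv1
    have hScompl : {x | G x < F x}ᶜ = Set.Icc (-b) b := by
      ext x
      simp only [Set.mem_compl_iff, Set.mem_setOf_eq, Set.mem_Icc]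
      rw [hchar x, not_lt]
      constructor
      · intro h
        have hx2 : x^2 ≤ b^2 := by nlinarith
        exact abs_le_of_sq_le_sq' hx2 hbnn
      · rintro ⟨h1, h2⟩
        have hx2 : x^2 ≤ b^2 := sq_le_sq' h1 h2
        nlinarith
    have hcompl_val : ∫ x in {x | G x < F x}ᶜ, (F x - G x)
        = (∫ x in (-b)..b, F x) - ∫ x in (-b)..b, G x := by
      rw [hScompl, integral_Icc_eq_integral_Ioc,
        ← intervalIntegral.integral_of_le (by linarith : -b ≤ b),
        intervalIntegral.integral_sub (hFcont.intervalIntegrable _ _)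
          (hGcont.intervalIntegrable _ _)]
    have hval : ∫ x in {x | G x < F x}, (F x - G x)
        = (∫ x in (-b)..b, G x) - ∫ x in (-b)..b, F x := by
      simp only [Pi.sub_apply] at hsplit
      linarith [hsplit, htot, hcompl_val]
    rw [hval, hIF b, hIG b, min_eq_right hab, max_eq_left hab]
    have h2 := sym_integral (b / Real.sqrt v) b
    linear_combination (Real.sqrt (2*π))⁻¹ * h2

lemma xSig_tendsto : Tendsto xSig (nhdsWithin 1 {(1 : ℝ)}ᶜ) (nhds 1) := by
  have h := Real.hasDerivAt_log one_ne_zero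
  rw [hasDerivAt_iff_tendsto_slope] at h
  simp only [inv_one] at h
  have hslope : Tendsto (fun w : ℝ => Real.log w / (w - 1))
      (nhdsWithin 1 {(1:ℝ)}ᶜ) (nhds 1) := by
    refine h.congr fun w => ?_
    simp [slope_def_field, Real.log_one]
  have h1 : Tendsto (fun w : ℝ => Real.sqrt w) (nhdsWithin 1 {(1:ℝ)}ᶜ) (nhds 1) := by
    have hc := Real.continuous_sqrt.tendsto 1
    rw [Real.sqrt_one] at hc
    exact hc.mono_left nhdsWithin_le_nhds
  have h2 : Tendsto (fun w : ℝ => Real.sqrt (Real.log w / (w - 1)))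
      (nhdsWithin 1 {(1:ℝ)}ᶜ) (nhds 1) := by
    have hc := Real.continuous_sqrt.tendsto 1
    rw [Real.sqrt_one] at hc
    exact hc.comp hslope
  have := h1.mul h2
  rw [mul_one] at this
  exact this

/-- For σ² ∈ (0,1) ∪ (1,+∞), with x(σ) = σ(ln σ²/(σ²−1))^{1/2}:
d_TV(N(0,σ²),N(0,1)) = (2/√(2π)) ∫_{min{x(σ),x(σ)/σ}}^{max{x(σ),x(σ)/σ}} e^{−x²/2} dx
  ≤ (2/√(2π))·x(σ)·|1/σ − 1|, and x(σ) → 1 as σ² → 1. -/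
theorem tv_gaussian_variance_formula (v : ℝ) (hv : 0 < v) (hv1 : v ≠ 1) :
    (dTV (gauss 0 v) (gauss 0 1) =
      2 / Real.sqrt (2 * π) *
        ∫ x in (min (xSig v) (xSig v / Real.sqrt v))..(max (xSig v) (xSig v / Real.sqrt v)),
          Real.exp (-x ^ 2 / 2)) ∧
    dTV (gauss 0 v) (gauss 0 1) ≤
      2 / Real.sqrt (2 * π) * xSig v * |1 / Real.sqrt v - 1| ∧
    Tendsto xSig (nhdsWithin 1 {(1 : ℝ)}ᶜ) (nhds 1) := by
  have hsv : (0:ℝ) < Real.sqrt v := Real.sqrt_pos.mpr hv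
  have hv' : v.toNNReal ≠ 0 := by
    simp only [ne_eq, Real.toNNReal_eq_zero, not_le]
    exact hv
  have h1' : (1:ℝ).toNNReal ≠ 0 := by norm_num
  have hfeq : gaussianPDFReal 0 v.toNNReal
      = fun x => (Real.sqrt (2*π*v))⁻¹ * rexp (-x^2/(2*v)) := by
    funext x
    simp [gaussianPDFReal, Real.coe_toNNReal _ hv.le]
  have hgeq : gaussianPDFReal 0 (1:ℝ).toNNReal
      = fun x => (Real.sqrt (2*π))⁻¹ * rexp (-x^2/2) := by
    funext x
    simp [gaussianPDFReal, Real.toNNReal_one]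
  have hfi : Integrable (fun x => (Real.sqrt (2*π*v))⁻¹ * rexp (-x^2/(2*v))) := by
    rw [← hfeq]; exact integrable_gaussianPDFReal 0 _
  have hgi : Integrable (fun x => (Real.sqrt (2*π))⁻¹ * rexp (-x^2/2)) := by
    rw [← hgeq]; exact integrable_gaussianPDFReal 0 _
  have hfint : ∫ x, (Real.sqrt (2*π*v))⁻¹ * rexp (-x^2/(2*v)) = 1 := by
    rw [show (fun x => (Real.sqrt (2*π*v))⁻¹ * rexp (-x^2/(2*v))) = gaussianPDFReal 0 v.toNNReal
      from hfeq.symm]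
    exact integral_gaussianPDFReal_eq_one 0 hv'
  have hgint : ∫ x, (Real.sqrt (2*π))⁻¹ * rexp (-x^2/2) = 1 := by
    rw [show (fun x => (Real.sqrt (2*π))⁻¹ * rexp (-x^2/2)) = gaussianPDFReal 0 (1:ℝ).toNNReal
      from hgeq.symm]
    exact integral_gaussianPDFReal_eq_one 0 h1'
  have hSmeas : MeasurableSet {x | (Real.sqrt (2*π))⁻¹ * rexp (-x^2/2)
      < (Real.sqrt (2*π*v))⁻¹ * rexp (-x^2/(2*v))} :=
    measurableSet_lt (by fun_prop) (by fun_prop)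
  have happly : ∀ (w : ℝ), 0 < w → ∀ (Fn : ℝ → ℝ), gaussianPDFReal 0 w.toNNReal = Fn →
      ∀ A : Set ℝ, MeasurableSet A → ((gauss 0 w) A).toReal = ∫ x in A, Fn x := by
    intro w hw Fn hFn A _
    have hw' : w.toNNReal ≠ 0 := by
      simp only [ne_eq, Real.toNNReal_eq_zero, not_le]; exact hw
    rw [gauss, gaussianReal_apply_eq_integral 0 hw' A,
      ENNReal.toReal_ofReal (integral_nonneg fun x => gaussianPDFReal_nonneg 0 w.toNNReal x), hFn]
  have hTV := dTV_eq_density hfi hgi (by rw [hfint, hgint]) hSmeas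
    (happly v hv _ hfeq) (happly 1 one_pos _ hgeq)
  have hpart1 : dTV (gauss 0 v) (gauss 0 1) =
      2 / Real.sqrt (2 * π) *
        ∫ x in (min (xSig v) (xSig v / Real.sqrt v))..(max (xSig v) (xSig v / Real.sqrt v)),
          Real.exp (-x ^ 2 / 2) :=
    hTV.trans (key_calc hv hv1 _ _ rfl rfl hfi hgi hfint hgint)
  refine ⟨hpart1, ?_, xSig_tendsto⟩
  have hbnn : 0 ≤ xSig v := mul_nonneg (Real.sqrt_nonneg _) (Real.sqrt_nonneg _)
  have hEcont : Continuous fun x : ℝ => rexp (-x^2/2) := by fun_prop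
  rw [hpart1]
  have hI : (∫ x in (min (xSig v) (xSig v / Real.sqrt v))..(max (xSig v) (xSig v / Real.sqrt v)),
      Real.exp (-x ^ 2 / 2)) ≤ xSig v * |1 / Real.sqrt v - 1| := by
    have hle : (∫ x in (min (xSig v) (xSig v / Real.sqrt v))..(max (xSig v) (xSig v / Real.sqrt v)),
        Real.exp (-x ^ 2 / 2))
        ≤ max (xSig v) (xSig v / Real.sqrt v) - min (xSig v) (xSig v / Real.sqrt v) := by
      calc (∫ x in (min (xSig v) (xSig v / Real.sqrt v))..(max (xSig v) (xSig v / Real.sqrt v)),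
          Real.exp (-x ^ 2 / 2))
          ≤ ∫ _x in (min (xSig v) (xSig v / Real.sqrt v))..(max (xSig v) (xSig v / Real.sqrt v)),
            (1:ℝ) := by
            refine intervalIntegral.integral_mono_on min_le_max
              (hEcont.intervalIntegrable _ _) intervalIntegrable_const fun x _ => ?_
            exact Real.exp_le_one_iff.mpr (by nlinarith [sq_nonneg x])
        _ = max (xSig v) (xSig v / Real.sqrt v) - min (xSig v) (xSig v / Real.sqrt v) := by simp
    have hdiff : max (xSig v) (xSig v / Real.sqrt v) - min (xSig v) (xSig v / Real.sqrt v)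
        = xSig v * |1 / Real.sqrt v - 1| := by
      rw [max_sub_min_eq_abs]
      have : xSig v / Real.sqrt v - xSig v = xSig v * (1 / Real.sqrt v - 1) := by ring
      rw [this, abs_mul, abs_of_nonneg hbnn]
    linarith [hle, hdiff.le]
  calc 2 / Real.sqrt (2 * π) *
        ∫ x in (min (xSig v) (xSig v / Real.sqrt v))..(max (xSig v) (xSig v / Real.sqrt v)),
          Real.exp (-x ^ 2 / 2)
      ≤ 2 / Real.sqrt (2 * π) * (xSig v * |1 / Real.sqrt v - 1|) :=
        mul_le_mul_of_nonneg_left hI (by positivity)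
    _ = 2 / Real.sqrt (2 * π) * xSig v * |1 / Real.sqrt v - 1| := by ring
end

section
/- Let γ > 0, κ > 0 with γ² − 4κ ≤ 0, and let h > 0. Then both (complex) roots of the quadratic polynomial λ² + (γh − 2)λ + (1 − γh + κh²) have modulus strictly less than 1 if and only if h ∈ (0, γ/κ). -/
/-!
The discriminant of the characteristic polynomial is `h² (γ² - 4κ) ≤ 0`, so its roots are complex
conjugates (or a double real root) and each has squared modulus equal to the constant term
`1 - γh + κh²`. Hence both roots lie in the open unit disc iff `κh² < γh`, i.e. `h < γ / κ`.
-/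

theorem exists_sq_add_mul_add_eq_zero {K : Type*} [Field K] [IsAlgClosed K] [NeZero (2 : K)]
    (b c : K) : ∃ z : K, z ^ 2 + b * z + c = 0 := by
  obtain ⟨z, hz⟩ := exists_quadratic_eq_zero (one_ne_zero' K)
    (IsAlgClosed.exists_eq_mul_self (discrim 1 b c))
  exact ⟨z, by simpa [sq] using hz⟩

theorem Complex.normSq_eq_of_sq_add_mul_add_eq_zero {b c : ℝ} (hdisc : b ^ 2 - 4 * c ≤ 0)
    {z : ℂ} (hz : z ^ 2 + b * z + c = 0) : Complex.normSq z = c := by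
  have hre : z.re ^ 2 - z.im ^ 2 + b * z.re + c = 0 := by
    simpa [sq] using congrArg Complex.re hz
  have him : z.im * (2 * z.re + b) = 0 := by
    linear_combination (by simpa [sq] using congrArg Complex.im hz : _ = (0 : ℝ))
  rw [Complex.normSq_apply]
  rcases mul_eq_zero.mp him with hy | hx
  · -- a real root: `(2x + b)² = b² - 4c ≤ 0` forces the double root `x = -b/2`
    have hx : 2 * z.re + b = 0 := by
      rw [hy] at hre
      nlinarith [sq_nonneg (2 * z.re + b)]
    rw [hy] at hre ⊢
    linear_combination z.re * hx - hre
  · linear_combination z.re * hx - hre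

theorem Complex.forall_norm_lt_one_iff_of_discrim_nonpos {b c : ℝ} (hdisc : b ^ 2 - 4 * c ≤ 0) :
    (∀ z : ℂ, z ^ 2 + b * z + c = 0 → ‖z‖ < 1) ↔ c < 1 := by
  have hnorm {z : ℂ} (hz : z ^ 2 + b * z + c = 0) : ‖z‖ < 1 ↔ c < 1 := by
    rw [← sq_lt_one_iff₀ (norm_nonneg z), Complex.sq_norm,
      Complex.normSq_eq_of_sq_add_mul_add_eq_zero hdisc hz]
  obtain ⟨z₀, hz₀⟩ := exists_sq_add_mul_add_eq_zero (b : ℂ) (c : ℂ)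
  exact ⟨fun H => (hnorm hz₀).mp (H z₀ hz₀), fun hc z hz => (hnorm hz).mpr hc⟩

theorem oscillator_roots_modulus_lt_one_iff_general (γ κ h : ℝ) (hκ : 0 < κ)
    (hdisc : γ ^ 2 - 4 * κ ≤ 0) (hh : 0 < h) :
    (∀ z : ℂ, z ^ 2 + ((γ * h - 2 : ℝ) : ℂ) * z + ((1 - γ * h + κ * h ^ 2 : ℝ) : ℂ) = 0 →
      ‖z‖ < 1) ↔ h ∈ Set.Ioo 0 (γ / κ) := by
  have hdisc' : (γ * h - 2) ^ 2 - 4 * (1 - γ * h + κ * h ^ 2) ≤ 0 := by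
    have : (γ * h - 2) ^ 2 - 4 * (1 - γ * h + κ * h ^ 2) = h ^ 2 * (γ ^ 2 - 4 * κ) := by ring
    rw [this]
    exact mul_nonpos_of_nonneg_of_nonpos (sq_nonneg h) hdisc
  rw [Complex.forall_norm_lt_one_iff_of_discrim_nonpos hdisc', Set.mem_Ioo, lt_div_iff₀ hκ]
  constructor
  · intro hc
    exact ⟨hh, by nlinarith⟩
  · rintro ⟨-, hlt⟩
    nlinarith

/-- Let γ > 0, κ > 0 with γ² − 4κ ≤ 0 and h > 0. Then both complex roots of
λ² + (γh − 2)λ + (1 − γh + κh²) have modulus strictly less than 1 if and only if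
h ∈ (0, γ/κ). -/
theorem oscillator_roots_modulus_lt_one_iff (γ κ h : ℝ) (hγ : 0 < γ) (hκ : 0 < κ)
    (hdisc : γ ^ 2 - 4 * κ ≤ 0) (hh : 0 < h) :
    (∀ z : ℂ, z ^ 2 + ((γ * h - 2 : ℝ) : ℂ) * z + ((1 - γ * h + κ * h ^ 2 : ℝ) : ℂ) = 0 →
      ‖z‖ < 1) ↔ h ∈ Set.Ioo 0 (γ / κ) :=
  oscillator_roots_modulus_lt_one_iff_general γ κ h hκ hdisc hh
end
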